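/- arXiv:1106.2362 — 9 statements merged into one kernel-verified Lean document; each statement's English description precedes it below -/
import Mathlib

section
/- Let L be a metabelian Lie algebra over a field k. For all x₀, x₁, b ∈ L and any list x₂,...,xₙ of elements of L (n ≥ 1), the left-normed brackets satisfy [x₀,x₁,x₂,...,xₙ,b] = [x₀,b,x₁,x₂,...,xₙ] − [⁅x₁,b⁆,x₀,x₂,...,xₙ]. (This is the second case of the multiplication table of regular words in the free metabelian Lie algebra.) -/
open LieAlgebra in
lemma metab_zero (k : Type*) [Field k] (L : Type*) [LieRing L]
    [LieAlgebra k L] (hL : derivedSeries k L 2 = ⊥)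
    {d z : L} (hd : d ∈ derivedSeries k L 1) (hz : z ∈ derivedSeries k L 1) :
    ⁅d, z⁆ = 0 := by
  have h : ⁅d, z⁆ ∈ derivedSeries k L 2 := by
    rw [show (2:ℕ) = 1 + 1 from rfl, derivedSeries_def, derivedSeriesOfIdeal_succ]
    exact LieSubmodule.lie_mem_lie hd hz
  rw [hL] at h
  exact h

open LieAlgebra in
lemma mem_der_one (k : Type*) [Field k] (L : Type*) [LieRing L]
    [LieAlgebra k L] (x y : L) : ⁅x, y⁆ ∈ derivedSeries k L 1 := by
  rw [derivedSeries_def, show (1:ℕ)=0+1 from rfl, derivedSeriesOfIdeal_succ,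
    derivedSeriesOfIdeal_zero]
  exact LieSubmodule.lie_mem_lie trivial trivial

open LieAlgebra in
lemma fold_comm (k : Type*) [Field k] (L : Type*) [LieRing L]
    [LieAlgebra k L] (hL : derivedSeries k L 2 = ⊥)
    (l : List L) : ∀ d : L, d ∈ derivedSeries k L 1 → ∀ b : L,
    ⁅l.foldl (fun a c => ⁅a, c⁆) d, b⁆ = l.foldl (fun a c => ⁅a, c⁆) ⁅d, b⁆ := by
  induction l with
  | nil => intros; rfl
  | cons c l ih =>
    intro d hd b
    simp only [List.foldl_cons]
    have hdc : ⁅d, c⁆ ∈ derivedSeries k L 1 := by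
      rw [← lie_skew]; exact neg_mem ((derivedSeries k L 1).lie_mem hd)
    rw [ih ⁅d, c⁆ hdc b]
    congr 1
    have hz : ⁅d, ⁅c, b⁆⁆ = 0 := metab_zero k L hL hd (mem_der_one k L c b)
    have h := leibniz_lie d c b
    rw [hz] at h
    have h2 : ⁅⁅d, c⁆, b⁆ = -⁅c, ⁅d, b⁆⁆ := by
      rw [eq_neg_iff_add_eq_zero]; exact h.symm
    rw [h2, ← lie_skew, neg_neg]

/-- In a metabelian Lie algebra, for all `x₀ x₁ b` and a list `x₂, …, xₙ` (given by `l`),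
the left-normed brackets satisfy
`[x₀,x₁,x₂,…,xₙ,b] = [x₀,b,x₁,x₂,…,xₙ] − [⁅x₁,b⁆,x₀,x₂,…,xₙ]`. -/
theorem leftNormed_bracket_mul_table (k : Type*) [Field k] (L : Type*) [LieRing L]
    [LieAlgebra k L] (hL : LieAlgebra.derivedSeries k L 2 = ⊥)
    (x₀ x₁ b : L) (l : List L) :
    (l ++ [b]).foldl (fun a c => ⁅a, c⁆) ⁅x₀, x₁⁆ =
      (x₁ :: l).foldl (fun a c => ⁅a, c⁆) ⁅x₀, b⁆ -
        l.foldl (fun a c => ⁅a, c⁆) ⁅⁅x₁, b⁆, x₀⁆ := by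
  have hadd : ∀ (u v : L), l.foldl (fun a c => ⁅a, c⁆) (u - v)
      = l.foldl (fun a c => ⁅a, c⁆) u - l.foldl (fun a c => ⁅a, c⁆) v := by
    induction l with
    | nil => intro u v; rfl
    | cons c l ih => intro u v; simp only [List.foldl_cons, sub_lie]; exact ih _ _
  rw [List.foldl_append, List.foldl_cons]
  simp only [List.foldl_cons]
  rw [fold_comm k L hL l ⁅x₀, x₁⁆ (mem_der_one k L x₀ x₁) b]
  have hkey : ⁅⁅x₀, x₁⁆, b⁆ = ⁅⁅x₀, b⁆, x₁⁆ - ⁅⁅x₁, b⁆, x₀⁆ := by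
    rw [lie_lie, show ⁅⁅x₀, b⁆, x₁⁆ = -⁅x₁, ⁅x₀, b⁆⁆ from (lie_skew _ _).symm,
      show ⁅⁅x₁, b⁆, x₀⁆ = -⁅x₀, ⁅x₁, b⁆⁆ from (lie_skew _ _).symm]
    abel
  rw [hkey, hadd]; rfl
end

section
/- Let k be a field and X a linearly ordered set. In the free metabelian Lie algebra L₍₂₎(X), the family consisting of the images of the generators x ∈ X together with the images of all regular R-words [a₀,a₁,...,aₙ] (n ≥ 1, aᵢ ∈ X, a₀ > a₁ ≤ a₂ ≤ ⋯ ≤ aₙ) is a k-linear basis of L₍₂₎(X). -/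
/-- The free metabelian Lie algebra on `X` over `k`. -/
abbrev FreeMetabelianLieAlgebra (k : Type u) [Field k] (X : Type v) :=
  FreeLieAlgebra k X ⧸ LieAlgebra.derivedSeries k (FreeLieAlgebra k X) 2

/-- The image of a generator `x ∈ X` in the free metabelian Lie algebra. -/
noncomputable def FreeMetabelianLieAlgebra.of (k : Type u) [Field k] {X : Type v} (x : X) :
    FreeMetabelianLieAlgebra k X :=
  LieSubmodule.Quotient.mk (N := LieAlgebra.derivedSeries k (FreeLieAlgebra k X) 2)
    (FreeLieAlgebra.of k x)

/-- A regular `R`-word on a linearly ordered set `X`: data `a₀, a₁, …, aₙ` with `n ≥ 1`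
and `a₀ > a₁ ≤ a₂ ≤ ⋯ ≤ aₙ`. -/
structure RWord (X : Type v) [LinearOrder X] where
  a₀ : X
  a₁ : X
  rest : List X
  lt : a₁ < a₀
  sorted : (a₁ :: rest).Pairwise (· ≤ ·)

/-- The image in the free metabelian Lie algebra of a regular `R`-word, i.e. the
left-normed bracket `[a₀, a₁, …, aₙ]` of the images of its letters. -/
noncomputable def RWord.toLie (k : Type u) [Field k] {X : Type v} [LinearOrder X]
    (w : RWord X) : FreeMetabelianLieAlgebra k X :=
  ((w.a₁ :: w.rest).map (FreeMetabelianLieAlgebra.of k)).foldl (fun u v => ⁅u, v⁆)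
    (FreeMetabelianLieAlgebra.of k w.a₀)

/-!
Spanning: in a metabelian Lie algebra `⁅⁅u, p⁆, q⁆ = ⁅⁅u, q⁆, p⁆` whenever `u` is a commutator,
so a left-normed bracket `[a₀, a₁, …, aₙ]` only depends on `a₀`, `a₁` and the multiset
`{a₂, …, aₙ}`. Sorting the tail, and using the Jacobi identity
`[a₀, a₁, x] = [a₀, x, a₁] - [a₁, x, a₀]` when a new letter `x` is smaller than `a₁`, shows that the
span of the family is closed under brackets; it contains the generators, so it is everything.

Independence: `L₍₂₎(X)` maps to the metabelian Lie algebra `(X →₀ k) ⋉ (X →₀ k[X])` of the Magnus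
embedding, sending `x` to `(eₓ, eₓ)` and the regular word `[a₀, a₁, …, aₙ]` to
`e_{a₀} X_{a₁} ⋯ X_{aₙ} - e_{a₁} X_{a₀} X_{a₂} ⋯ X_{aₙ}`. The coefficient of `X_{a₁} ⋯ X_{aₙ}` at
`e_{a₀}` is `1` on this image and vanishes on the image of every other member of the family,
because `a₁` is the smallest letter of a regular word.
-/

open LieAlgebra

section LieRing

variable {R L L' : Type*} [CommRing R] [LieRing L] [LieAlgebra R L] [LieRing L']
  [LieAlgebra R L']

lemma LieHom.map_foldl_lie (f : L →ₗ⁅R⁆ L') (l : List L) (u : L) :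
    f (l.foldl (fun a b => ⁅a, b⁆) u) = (l.map f).foldl (fun a b => ⁅a, b⁆) (f u) := by
  induction l generalizing u with
  | nil => rfl
  | cons b l ih => simp only [List.foldl_cons, List.map_cons, ih, LieHom.map_lie]

lemma foldl_lie_sub (l : List L) (u v : L) :
    l.foldl (fun a b => ⁅a, b⁆) (u - v)
      = l.foldl (fun a b => ⁅a, b⁆) u - l.foldl (fun a b => ⁅a, b⁆) v := by
  induction l generalizing u v with
  | nil => rfl
  | cons b l ih => simp only [List.foldl_cons, sub_lie, ih]

lemma lie_mem_span_of_forall {s : Set L} (hs : ∀ a ∈ s, ∀ b ∈ s, ⁅a, b⁆ ∈ Submodule.span R s)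
    {u v : L} (hu : u ∈ Submodule.span R s) (hv : v ∈ Submodule.span R s) :
    ⁅u, v⁆ ∈ Submodule.span R s := by
  induction hu, hv using Submodule.span_induction₂ with
  | mem_mem a b ha hb => exact hs a ha b hb
  | zero_left => simp
  | zero_right => simp
  | add_left _ _ _ _ _ _ h₁ h₂ => rw [add_lie]; exact add_mem h₁ h₂
  | add_right _ _ _ _ _ _ h₁ h₂ => rw [lie_add]; exact add_mem h₁ h₂
  | smul_left r _ _ _ _ h => rw [smul_lie]; exact Submodule.smul_mem _ r h
  | smul_right r _ _ _ _ h => rw [lie_smul]; exact Submodule.smul_mem _ r h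

lemma lie_mem_derivedSeries_one (x y : L) : ⁅x, y⁆ ∈ derivedSeries R L 1 :=
  LieSubmodule.lie_mem_lie (LieSubmodule.mem_top x) (LieSubmodule.mem_top y)

lemma foldl_lie_mem_derivedSeries_one (l : List L) {u : L} (hu : u ∈ derivedSeries R L 1) :
    l.foldl (fun a b => ⁅a, b⁆) u ∈ derivedSeries R L 1 := by
  induction l generalizing u with
  | nil => exact hu
  | cons b l ih => exact ih (lie_mem_derivedSeries_one _ _)

lemma derivedSeries_two_eq_bot_of_lie_mem (I : LieIdeal R L) [IsLieAbelian I]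
    (hI : ∀ x y : L, ⁅x, y⁆ ∈ I) : derivedSeries R L 2 = ⊥ := by
  have h₁ : derivedSeries R L 1 ≤ I := (LieSubmodule.lie_le_iff _ _ _).mpr fun x _ y _ => hI x y
  exact eq_bot_iff.mpr ((LieSubmodule.mono_lie h₁ h₁).trans
    ((LieSubmodule.lie_abelian_iff_lie_self_eq_bot I).mp ‹_›).le)

section Metabelian

variable (hL : derivedSeries R L 2 = ⊥)
include hL

lemma lie_eq_zero_of_mem_derivedSeries_one {u v : L} (hu : u ∈ derivedSeries R L 1)
    (hv : v ∈ derivedSeries R L 1) : ⁅u, v⁆ = 0 := by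
  have h : ⁅u, v⁆ ∈ derivedSeries R L 2 := LieSubmodule.lie_mem_lie hu hv
  rwa [hL, LieSubmodule.mem_bot] at h

lemma lie_lie_swap_of_mem_derivedSeries_one {u : L} (hu : u ∈ derivedSeries R L 1) (p q : L) :
    ⁅⁅u, p⁆, q⁆ = ⁅⁅u, q⁆, p⁆ := by
  have h := leibniz_lie u p q
  rw [lie_eq_zero_of_mem_derivedSeries_one hL hu (lie_mem_derivedSeries_one p q),
    ← lie_skew p ⁅u, q⁆] at h
  exact add_neg_eq_zero.mp h.symm

lemma foldl_lie_eq_of_perm {l l' : List L} (h : l.Perm l') {u : L}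
    (hu : u ∈ derivedSeries R L 1) :
    l.foldl (fun a b => ⁅a, b⁆) u = l'.foldl (fun a b => ⁅a, b⁆) u := by
  induction h generalizing u with
  | nil => rfl
  | cons x _ ih => exact ih (lie_mem_derivedSeries_one _ _)
  | swap x y t => simp only [List.foldl_cons, lie_lie_swap_of_mem_derivedSeries_one hL hu]
  | trans _ _ ih₁ ih₂ => rw [ih₁ hu, ih₂ hu]

end Metabelian

end LieRing

namespace LieIdeal

variable {R L L' : Type*} [CommRing R] [LieRing L] [LieAlgebra R L] [LieRing L']
  [LieAlgebra R L'] (I : LieIdeal R L)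

def mkQ : L →ₗ⁅R⁆ L ⧸ I :=
  { (LieSubmodule.Quotient.mk' I : L →ₗ[R] L ⧸ I) with map_lie' := rfl }

lemma mkQ_surjective : Function.Surjective I.mkQ :=
  LieSubmodule.Quotient.surjective_mk' I

def liftQ (f : L →ₗ⁅R⁆ L') (hf : ∀ x ∈ I, f x = 0) : L ⧸ I →ₗ⁅R⁆ L' :=
  { I.toSubmodule.liftQ f.toLinearMap hf with
    map_lie' := by rintro ⟨x⟩ ⟨y⟩; exact f.map_lie x y }

@[simp]
lemma liftQ_mkQ (f : L →ₗ⁅R⁆ L') (hf : ∀ x ∈ I, f x = 0) (x : L) :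
    I.liftQ f hf (I.mkQ x) = f x :=
  rfl

lemma derivedSeries_quotient_eq_bot (n : ℕ) :
    derivedSeries R (L ⧸ derivedSeries R L n) n = ⊥ := by
  rw [← derivedSeries_map_eq n (mkQ_surjective _), eq_bot_iff, map_le_iff_le_comap]
  intro x hx
  rw [mem_comap, LieSubmodule.mem_bot]
  exact LieSubmodule.Quotient.mk_eq_zero'.mpr hx

end LieIdeal

lemma FreeLieAlgebra.apply_mem_of_forall_of {R X L : Type*} [CommRing R] [LieRing L]
    [LieAlgebra R L] (f : FreeLieAlgebra R X →ₗ⁅R⁆ L) (S : LieSubalgebra R L)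
    (h : ∀ x, f (of R x) ∈ S) (z : FreeLieAlgebra R X) : f z ∈ S := by
  let g : FreeLieAlgebra R X →ₗ⁅R⁆ S := lift R fun x => ⟨f (of R x), h x⟩
  have hg : S.incl.comp g = f := hom_ext fun x => by simp [g]
  rw [← hg]
  exact (g z).2

lemma MvPolynomial.prod_map_X {R σ : Type*} [CommSemiring R] [DecidableEq σ] (l : List σ) :
    (l.map X).prod = monomial (Multiset.toFinsupp ↑l) (1 : R) := by
  induction l with
  | nil => simp
  | cons b l ih =>
    rw [List.map_cons, List.prod_cons, ih, X, monomial_mul, one_mul, ← Multiset.cons_coe,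
      ← Multiset.singleton_add, Multiset.toFinsupp_add, Multiset.toFinsupp_singleton]

namespace FreeMetabelianLieAlgebra

variable {k : Type*} [Field k] {X L : Type*} [LieRing L] [LieAlgebra k L]

lemma derivedSeries_two_eq_bot : derivedSeries k (FreeMetabelianLieAlgebra k X) 2 = ⊥ :=
  LieIdeal.derivedSeries_quotient_eq_bot 2

noncomputable def lift (hL : derivedSeries k L 2 = ⊥) (f : X → L) :
    FreeMetabelianLieAlgebra k X →ₗ⁅k⁆ L :=
  LieIdeal.liftQ _ (FreeLieAlgebra.lift k f) fun z hz => by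
    have h := LieIdeal.derivedSeries_map_le (f := FreeLieAlgebra.lift k f) 2 (LieIdeal.mem_map hz)
    rwa [hL, LieSubmodule.mem_bot] at h

@[simp]
lemma lift_of (hL : derivedSeries k L 2 = ⊥) (f : X → L) (x : X) : lift hL f (of k x) = f x :=
  (LieIdeal.liftQ_mkQ _ _ _ _).trans (FreeLieAlgebra.lift_of_apply f x)

end FreeMetabelianLieAlgebra

/-- The semidirect product `V ⋉ N` of the abelian Lie algebras `V = X →₀ k` and `N = X →₀ k[X]`,
where `v ∈ V` acts on `N` as multiplication by `∑ₓ vₓ Xₓ`. -/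
def MagnusModel (k X : Type*) [CommRing k] : Type _ := (X →₀ k) × (X →₀ MvPolynomial X k)

namespace MagnusModel

open MvPolynomial (monomial coeff lcoeff prod_map_X)

variable {k X : Type*} [CommRing k]

noncomputable instance : AddCommGroup (MagnusModel k X) :=
  inferInstanceAs (AddCommGroup ((X →₀ k) × (X →₀ MvPolynomial X k)))

noncomputable instance : Module k (MagnusModel k X) :=
  inferInstanceAs (Module k ((X →₀ k) × (X →₀ MvPolynomial X k)))

@[simp] lemma zero_fst : (0 : MagnusModel k X).1 = 0 := rfl
@[simp] lemma zero_snd : (0 : MagnusModel k X).2 = 0 := rfl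
@[simp] lemma add_fst (u v : MagnusModel k X) : (u + v).1 = u.1 + v.1 := rfl
@[simp] lemma add_snd (u v : MagnusModel k X) : (u + v).2 = u.2 + v.2 := rfl
@[simp] lemma smul_fst (r : k) (u : MagnusModel k X) : (r • u).1 = r • u.1 := rfl
@[simp] lemma smul_snd (r : k) (u : MagnusModel k X) : (r • u).2 = r • u.2 := rfl

lemma ext {u v : MagnusModel k X} (h₁ : u.1 = v.1) (h₂ : u.2 = v.2) : u = v := Prod.ext h₁ h₂

noncomputable def weight (u : MagnusModel k X) : MvPolynomial X k :=
  Finsupp.linearCombination k MvPolynomial.X u.1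

@[simp] lemma weight_add (u v : MagnusModel k X) : weight (u + v) = weight u + weight v :=
  map_add _ _ _

@[simp] lemma weight_smul (r : k) (u : MagnusModel k X) : weight (r • u) = r • weight u :=
  map_smul _ _ _

noncomputable instance : Bracket (MagnusModel k X) (MagnusModel k X) :=
  ⟨fun u v => ((0 : X →₀ k), weight v • u.2 - weight u • v.2)⟩

@[simp] lemma lie_fst (u v : MagnusModel k X) : ⁅u, v⁆.1 = 0 := rfl
@[simp] lemma lie_snd (u v : MagnusModel k X) : ⁅u, v⁆.2 = weight v • u.2 - weight u • v.2 := rfl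
@[simp] lemma weight_lie (u v : MagnusModel k X) : weight ⁅u, v⁆ = 0 := map_zero _

noncomputable instance : LieRing (MagnusModel k X) where
  add_lie u v w := ext (by simp) (by
    simp only [lie_snd, add_snd, weight_add, add_smul, smul_add]; abel)
  lie_add u v w := ext (by simp) (by
    simp only [lie_snd, add_snd, weight_add, add_smul, smul_add]; abel)
  lie_self u := ext (by simp) (by simp)
  leibniz_lie u v w := ext (by simp) (by
    simp only [lie_snd, add_snd, weight_lie, zero_smul, smul_sub, smul_smul]
    module)

noncomputable instance : LieAlgebra k (MagnusModel k X) where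
  lie_smul r u v := ext (by simp) (by
    simp only [lie_snd, smul_snd, weight_smul, smul_sub, smul_assoc, smul_comm (weight u) r])

def sndIdeal : LieIdeal k (MagnusModel k X) where
  carrier := {u | u.1 = 0}
  add_mem' {u v} (hu : u.1 = 0) (hv : v.1 = 0) := by simp [hu, hv]
  zero_mem' := rfl
  smul_mem' r u (hu : u.1 = 0) := by simp [hu]
  lie_mem _ := rfl

lemma weight_eq_zero_of_mem_sndIdeal {u : MagnusModel k X} (hu : u ∈ sndIdeal) : weight u = 0 := by
  simp [weight, show u.1 = 0 from hu]

instance : IsLieAbelian (sndIdeal (k := k) (X := X)) where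
  trivial u v := Subtype.ext <| ext rfl <| by
    simp [weight_eq_zero_of_mem_sndIdeal u.2, weight_eq_zero_of_mem_sndIdeal v.2]

lemma derivedSeries_two_eq_bot : derivedSeries k (MagnusModel k X) 2 = ⊥ :=
  derivedSeries_two_eq_bot_of_lie_mem sndIdeal fun _ _ => rfl

variable (k) in
noncomputable def gen (x : X) : MagnusModel k X := (Finsupp.single x 1, Finsupp.single x 1)

noncomputable def ofSnd (ω : X →₀ MvPolynomial X k) : MagnusModel k X := (0, ω)

@[simp] lemma weight_gen (x : X) : weight (gen k x) = MvPolynomial.X x := by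
  simp [weight, gen]

@[simp] lemma weight_ofSnd (ω : X →₀ MvPolynomial X k) : weight (ofSnd ω) = 0 := map_zero _

lemma lie_gen_gen (x y : X) :
    ⁅gen k x, gen k y⁆ = ofSnd (Finsupp.single x (MvPolynomial.X y)
      - Finsupp.single y (MvPolynomial.X x) : X →₀ MvPolynomial X k) :=
  ext rfl (by rw [lie_snd, weight_gen, weight_gen]; simp [gen, ofSnd])

lemma lie_ofSnd_gen (ω : X →₀ MvPolynomial X k) (y : X) :
    ⁅ofSnd ω, gen k y⁆ = ofSnd (MvPolynomial.X (R := k) y • ω) :=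
  ext rfl (by rw [lie_snd, weight_gen, weight_ofSnd]; simp [ofSnd])

lemma foldl_lie_gen_ofSnd (l : List X) (ω : X →₀ MvPolynomial X k) :
    (l.map (gen k)).foldl (fun a b => ⁅a, b⁆) (ofSnd ω)
      = ofSnd ((l.map (MvPolynomial.X (R := k))).prod • ω) := by
  induction l generalizing ω with
  | nil => simp
  | cons b l ih =>
    simp only [List.map_cons, List.foldl_cons, lie_ofSnd_gen, ih, List.prod_cons,
      mul_comm _ (List.prod _), mul_smul]

lemma foldl_lie_gen [DecidableEq X] (a₀ a₁ : X) (l : List X) :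
    ((a₁ :: l).map (gen k)).foldl (fun a b => ⁅a, b⁆) (gen k a₀)
      = ofSnd (Finsupp.single a₀ (monomial (Multiset.toFinsupp ↑(a₁ :: l)) (1 : k))
          - Finsupp.single a₁ (monomial (Multiset.toFinsupp ↑(a₀ :: l)) (1 : k))) := by
  rw [List.map_cons, List.foldl_cons, lie_gen_gen, foldl_lie_gen_ofSnd, smul_sub,
    Finsupp.smul_single, Finsupp.smul_single, ← prod_map_X, ← prod_map_X, List.map_cons,
    List.map_cons, List.prod_cons, List.prod_cons, smul_eq_mul, smul_eq_mul, mul_comm,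
    mul_comm _ (MvPolynomial.X a₀)]

noncomputable def fstCoord (x : X) : Module.Dual k (MagnusModel k X) :=
  Finsupp.lapply x ∘ₗ LinearMap.fst k (X →₀ k) (X →₀ MvPolynomial X k)

noncomputable def sndCoeff (x : X) (d : X →₀ ℕ) : Module.Dual k (MagnusModel k X) :=
  lcoeff k d ∘ₗ Finsupp.lapply x ∘ₗ LinearMap.snd k (X →₀ k) (X →₀ MvPolynomial X k)

@[simp] lemma fstCoord_gen [DecidableEq X] (x y : X) :
    fstCoord x (gen k y) = if y = x then 1 else 0 :=
  Finsupp.single_apply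

@[simp] lemma fstCoord_ofSnd (x : X) (ω : X →₀ MvPolynomial X k) : fstCoord x (ofSnd ω) = 0 :=
  rfl

@[simp] lemma sndCoeff_ofSnd (x : X) (d : X →₀ ℕ) (ω : X →₀ MvPolynomial X k) :
    sndCoeff x d (ofSnd ω) = coeff d (ω x) :=
  rfl

lemma sndCoeff_gen {d : X →₀ ℕ} (hd : d ≠ 0) (x y : X) : sndCoeff x d (gen k y) = 0 := by
  classical
  show coeff d (Finsupp.single y (1 : MvPolynomial X k) x) = 0
  rw [Finsupp.single_apply]
  split_ifs
  · rw [MvPolynomial.coeff_one, if_neg hd.symm]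
  · exact MvPolynomial.coeff_zero d

end MagnusModel

namespace RWord

variable {X : Type*} [LinearOrder X]

lemma eq_of_perm {w w' : RWord X} (h₀ : w.a₀ = w'.a₀)
    (h : (w.a₁ :: w.rest).Perm (w'.a₁ :: w'.rest)) : w = w' := by
  obtain ⟨h₁, hrest⟩ := List.cons_eq_cons.mp (h.eq_of_pairwise' w.sorted w'.sorted)
  cases w; cases w'
  simp_all

lemma not_perm_of_a₁_eq_a₀ {w w' : RWord X} (h : w'.a₁ = w.a₀) :
    ¬ (w'.a₀ :: w'.rest).Perm (w.a₁ :: w.rest) := by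
  intro hp
  have hle : w'.a₁ ≤ w.a₁ := by
    rcases List.mem_cons.mp (hp.symm.subset List.mem_cons_self) with h' | h'
    · exact h' ▸ w'.lt.le
    · exact List.rel_of_pairwise_cons w'.sorted h'
  exact (h ▸ hle).not_gt w.lt

end RWord

namespace FreeMetabelianLieAlgebra

section Independence

open MagnusModel

variable (k : Type*) [Field k] (X : Type*)

noncomputable def toMagnusModel : FreeMetabelianLieAlgebra k X →ₗ⁅k⁆ MagnusModel k X :=
  lift MagnusModel.derivedSeries_two_eq_bot (gen k)

variable {k X}

@[simp]
lemma toMagnusModel_of (x : X) : toMagnusModel k X (of k x) = gen k x :=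
  lift_of _ _ x

variable [LinearOrder X]

lemma toMagnusModel_toLie (w : RWord X) :
    toMagnusModel k X (w.toLie k)
      = ofSnd (Finsupp.single w.a₀ (MvPolynomial.monomial (Multiset.toFinsupp ↑(w.a₁ :: w.rest)) 1)
          - Finsupp.single w.a₁
              (MvPolynomial.monomial (Multiset.toFinsupp ↑(w.a₀ :: w.rest)) (1 : k))) := by
  have h : toMagnusModel k X ∘ of k = gen k := funext toMagnusModel_of
  rw [RWord.toLie, LieHom.map_foldl_lie, List.map_map, h, toMagnusModel_of, foldl_lie_gen]

open Classical in
lemma sndCoeff_toMagnusModel_toLie (w w' : RWord X) :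
    sndCoeff w.a₀ (Multiset.toFinsupp ↑(w.a₁ :: w.rest)) (toMagnusModel k X (w'.toLie k))
      = if w = w' then 1 else 0 := by
  have hperm {l l' : List X} :
      Multiset.toFinsupp (l : Multiset X) = Multiset.toFinsupp ↑l' ↔ l.Perm l' := by
    rw [Multiset.toFinsupp.injective.eq_iff, Multiset.coe_eq_coe]
  have h₀ : w'.a₀ = w.a₀ ∧ (w'.a₁ :: w'.rest).Perm (w.a₁ :: w.rest) ↔ w = w' :=
    ⟨fun h => (RWord.eq_of_perm h.1 h.2).symm, by rintro rfl; exact ⟨rfl, .refl _⟩⟩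
  rw [toMagnusModel_toLie]
  simp only [sndCoeff_ofSnd, Finsupp.sub_apply, Finsupp.single_apply, MvPolynomial.coeff_sub,
    apply_ite (MvPolynomial.coeff _), MvPolynomial.coeff_monomial, MvPolynomial.coeff_zero,
    hperm, ← ite_and]
  rw [if_neg (not_and.mpr RWord.not_perm_of_a₁_eq_a₀), sub_zero]
  exact if_congr h₀ rfl rfl

variable (k X) in
noncomputable def rWordFamily : X ⊕ RWord X → FreeMetabelianLieAlgebra k X :=
  Sum.elim (of k) (RWord.toLie k)

variable (k) in
noncomputable def rWordCoord : X ⊕ RWord X → Module.Dual k (FreeMetabelianLieAlgebra k X)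
  | .inl x => fstCoord x ∘ₗ (toMagnusModel k X : FreeMetabelianLieAlgebra k X →ₗ[k] _)
  | .inr w => sndCoeff w.a₀ (Multiset.toFinsupp ↑(w.a₁ :: w.rest)) ∘ₗ
      (toMagnusModel k X : FreeMetabelianLieAlgebra k X →ₗ[k] _)

open Classical in
lemma rWordCoord_rWordFamily (i j : X ⊕ RWord X) :
    rWordCoord k i (rWordFamily k X j) = if i = j then 1 else 0 := by
  rcases i with x | w <;> rcases j with y | w'
  · simp [rWordCoord, rWordFamily, eq_comm]
  · simp [rWordCoord, rWordFamily, toMagnusModel_toLie]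
  · simp [rWordCoord, rWordFamily,
      sndCoeff_gen (d := Multiset.toFinsupp (w.a₁ :: w.rest : Multiset X)) (by simp)]
  · simpa [rWordCoord, rWordFamily] using sndCoeff_toMagnusModel_toLie w w'

theorem linearIndependent_rWordFamily : LinearIndependent k (rWordFamily k X) :=
  .of_pairwise_dual_eq_zero_one _ (rWordCoord k)
    (fun i j hij => (rWordCoord_rWordFamily i j).trans (if_neg hij))
    (fun i => (rWordCoord_rWordFamily i i).trans (if_pos rfl))

end Independence

section Spanning

variable {k : Type*} [Field k] {X : Type*} [LinearOrder X]

lemma foldl_lie_mem_span {a₀ a₁ : X} (h : a₁ < a₀) (l : List X) (hl : ∀ b ∈ l, a₁ ≤ b) :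
    (l.map (of k)).foldl (fun u v => ⁅u, v⁆) ⁅of k a₀, of k a₁⁆
      ∈ Submodule.span k (Set.range (rWordFamily k X)) := by
  have hsort := List.perm_insertionSort (· ≤ ·) l
  let w : RWord X := ⟨a₀, a₁, l.insertionSort (· ≤ ·), h, List.pairwise_cons.mpr
    ⟨fun b hb => hl b (hsort.subset hb), List.pairwise_insertionSort _ l⟩⟩
  rw [foldl_lie_eq_of_perm derivedSeries_two_eq_bot (hsort.symm.map (of k))
    (lie_mem_derivedSeries_one _ _)]
  exact Submodule.subset_span ⟨.inr w, rfl⟩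

lemma lie_toLie_of_mem_span (w : RWord X) (x : X) :
    ⁅w.toLie k, of k x⁆ ∈ Submodule.span k (Set.range (rWordFamily k X)) := by
  have hw : ⁅w.toLie k, of k x⁆
      = ((w.rest ++ [x]).map (of k)).foldl (fun u v => ⁅u, v⁆) ⁅of k w.a₀, of k w.a₁⁆ := by
    simp [RWord.toLie, List.foldl_append]
  have hrest : ∀ b ∈ w.rest, w.a₁ ≤ b := fun _ hb => List.rel_of_pairwise_cons w.sorted hb
  rcases le_or_gt w.a₁ x with hx | hx
  · refine hw ▸ foldl_lie_mem_span w.lt _ fun b hb => ?_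
    rcases List.mem_append.mp hb with hb | hb
    · exact hrest b hb
    · exact (List.mem_singleton.mp hb) ▸ hx
  · have jacobi (a b c : FreeMetabelianLieAlgebra k X) :
        ⁅⁅a, b⁆, c⁆ = ⁅⁅a, c⁆, b⁆ - ⁅⁅b, c⁆, a⁆ := by
      rw [lie_lie, ← lie_skew ⁅b, c⁆ a, ← lie_skew ⁅a, c⁆ b]; abel
    have hx_le (b) (hb : b ∈ w.rest) : x ≤ b := hx.le.trans (hrest b hb)
    rw [hw, foldl_lie_eq_of_perm derivedSeries_two_eq_bot
      ((List.perm_append_singleton x w.rest).map (of k)) (lie_mem_derivedSeries_one _ _),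
      List.map_cons, List.foldl_cons, jacobi, foldl_lie_sub]
    exact sub_mem
      (foldl_lie_mem_span (hx.trans w.lt) (w.a₁ :: w.rest) (by simpa using ⟨hx.le, hx_le⟩))
      (foldl_lie_mem_span hx (w.a₀ :: w.rest) (by simpa using ⟨(hx.trans w.lt).le, hx_le⟩))

lemma toLie_mem_derivedSeries_one (w : RWord X) :
    w.toLie k ∈ derivedSeries k (FreeMetabelianLieAlgebra k X) 1 :=
  foldl_lie_mem_derivedSeries_one (w.rest.map (of k)) (lie_mem_derivedSeries_one _ _)

lemma lie_rWordFamily_mem_span (i j : X ⊕ RWord X) :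
    ⁅rWordFamily k X i, rWordFamily k X j⁆ ∈ Submodule.span k (Set.range (rWordFamily k X)) := by
  rcases i with x | w <;> rcases j with y | w'
  · rcases lt_trichotomy x y with h | rfl | h
    · rw [rWordFamily, Sum.elim_inl, Sum.elim_inl, ← lie_skew]
      exact neg_mem (foldl_lie_mem_span h [] nofun)
    · simp
    · exact foldl_lie_mem_span h [] nofun
  · rw [rWordFamily, Sum.elim_inl, Sum.elim_inr, ← lie_skew]
    exact neg_mem (lie_toLie_of_mem_span w' x)
  · exact lie_toLie_of_mem_span w y
  · rw [rWordFamily, Sum.elim_inr, Sum.elim_inr, lie_eq_zero_of_mem_derivedSeries_one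
      derivedSeries_two_eq_bot (toLie_mem_derivedSeries_one w) (toLie_mem_derivedSeries_one w')]
    exact zero_mem _

theorem span_rWordFamily : Submodule.span k (Set.range (rWordFamily k X)) = ⊤ := by
  let S : LieSubalgebra k (FreeMetabelianLieAlgebra k X) :=
    { Submodule.span k (Set.range (rWordFamily k X)) with
      lie_mem' := lie_mem_span_of_forall (by
        rintro _ ⟨i, rfl⟩ _ ⟨j, rfl⟩
        exact lie_rWordFamily_mem_span i j) }
  refine eq_top_iff.mpr fun z _ => ?_
  obtain ⟨z, rfl⟩ := LieIdeal.mkQ_surjective _ z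
  exact FreeLieAlgebra.apply_mem_of_forall_of _ S (fun x => Submodule.subset_span ⟨.inl x, rfl⟩) z

end Spanning

end FreeMetabelianLieAlgebra

/-- The images of the generators together with the images of the regular `R`-words form a
`k`-linear basis of the free metabelian Lie algebra `L₍₂₎(X)`. -/
theorem freeMetabelian_basis (k : Type u) [Field k] (X : Type v) [LinearOrder X] :
    LinearIndependent k
        (Sum.elim (fun x : X => FreeMetabelianLieAlgebra.of k x)
          (fun w : RWord X => w.toLie k)) ∧
      Submodule.span k
          (Set.range (Sum.elim (fun x : X => FreeMetabelianLieAlgebra.of k x)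
            (fun w : RWord X => w.toLie k))) = ⊤ :=
  ⟨FreeMetabelianLieAlgebra.linearIndependent_rWordFamily,
    FreeMetabelianLieAlgebra.span_rWordFamily⟩
end

section
/- Let k be a field and X a linearly ordered set. Every element of the free metabelian Lie algebra L₍₂₎(X) is a k-linear combination of images of generators x ∈ X and images of regular R-words [a₀,a₁,...,aₙ] (n ≥ 1, aᵢ ∈ X, a₀ > a₁ ≤ a₂ ≤ ⋯ ≤ aₙ); that is, these elements span L₍₂₎(X) over k. -/
/-!
The left-normed brackets of generators span `L₍₂₎(X)`: their span is closed under the bracket,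
by the Jacobi identity and induction on the length of the right factor. In a metabelian Lie
algebra `[x, y, a₁, …, aₙ]` is symmetric in `a₁, …, aₙ`, since `⁅⁅x, y⁆, ⁅a, b⁆⁆ = 0`, so it
suffices to treat `[a, b, m, c₁, …]` with `m ≤ c₁ ≤ ⋯` sorted. If `min a b ≤ m` this is, up to
sign, a regular `R`-word (or zero when `a = b`); otherwise the Jacobi identity
`[a, b, m] = [a, m, b] - [b, m, a]` moves the smallest letter `m` into second position.
-/

section LeftNormed

variable {R L : Type*} [CommRing R] [LieRing L] [LieAlgebra R L]

def leftNormedBracket (x : L) (l : List L) : L :=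
  l.foldl (fun u v => ⁅u, v⁆) x

@[simp]
theorem leftNormedBracket_cons (x y : L) (l : List L) :
    leftNormedBracket x (y :: l) = leftNormedBracket ⁅x, y⁆ l := rfl

theorem leftNormedBracket_append_singleton (x y : L) (l : List L) :
    leftNormedBracket x (l ++ [y]) = ⁅leftNormedBracket x l, y⁆ :=
  List.foldl_append ..

theorem leftNormedBracket_sub (x y : L) (l : List L) :
    leftNormedBracket (x - y) l = leftNormedBracket x l - leftNormedBracket y l := by
  induction l generalizing x y with
  | nil => rfl
  | cons z l ih => simp only [leftNormedBracket_cons, sub_lie, ih]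

theorem leftNormedBracket_zero (l : List L) : leftNormedBracket (0 : L) l = 0 := by
  simpa using leftNormedBracket_sub (0 : L) 0 l

theorem leftNormedBracket_neg (x : L) (l : List L) :
    leftNormedBracket (-x) l = -leftNormedBracket x l := by
  simpa [leftNormedBracket_zero] using leftNormedBracket_sub 0 x l

theorem lie_lie_lie_comm_of_metabelian (hL : ∀ p q r s : L, ⁅⁅p, q⁆, ⁅r, s⁆⁆ = 0)
    (x y a b : L) : ⁅⁅⁅x, y⁆, a⁆, b⁆ = ⁅⁅⁅x, y⁆, b⁆, a⁆ := by
  have h := leibniz_lie ⁅x, y⁆ a b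
  rw [hL, ← lie_skew a, ← sub_eq_add_neg, eq_comm, sub_eq_zero] at h
  exact h

theorem leftNormedBracket_lie_perm (hL : ∀ p q r s : L, ⁅⁅p, q⁆, ⁅r, s⁆⁆ = 0)
    {l l' : List L} (h : l.Perm l') (x y : L) :
    leftNormedBracket ⁅x, y⁆ l = leftNormedBracket ⁅x, y⁆ l' := by
  induction h generalizing x y with
  | nil => rfl
  | cons a _ ih => exact ih _ _
  | swap a b l => simp only [leftNormedBracket_cons, lie_lie_lie_comm_of_metabelian hL]
  | trans _ _ ih₁ ih₂ => exact (ih₁ x y).trans (ih₂ x y)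

variable (R) in
def leftNormedSpan {ι : Type*} (f : ι → L) : Submodule R L :=
  Submodule.span R (Set.range fun p : ι × List ι => leftNormedBracket (f p.1) (p.2.map f))

theorem lie_mem_leftNormedSpan_of_mem {ι : Type*} {f : ι → L} {u : L}
    (hu : u ∈ leftNormedSpan R f) (c : ι) : ⁅u, f c⁆ ∈ leftNormedSpan R f := by
  induction hu using Submodule.span_induction with
  | mem x hx =>
    obtain ⟨⟨a, l⟩, rfl⟩ := hx
    exact Submodule.subset_span ⟨(a, l ++ [c]), by simp [leftNormedBracket_append_singleton]⟩
  | zero => simp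
  | add x y _ _ hx hy => simpa only [add_lie] using add_mem hx hy
  | smul t x _ hx => simpa only [smul_lie] using Submodule.smul_mem _ t hx

theorem lie_leftNormedBracket_mem_leftNormedSpan {ι : Type*} {f : ι → L} (b : ι) (m : List ι)
    {u : L} (hu : u ∈ leftNormedSpan R f) :
    ⁅u, leftNormedBracket (f b) (m.map f)⁆ ∈ leftNormedSpan R f := by
  induction m using List.reverseRecOn generalizing u with
  | nil => exact lie_mem_leftNormedSpan_of_mem hu b
  | append_singleton m c ih =>
    rw [List.map_append, List.map_singleton, leftNormedBracket_append_singleton, leibniz_lie,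
      ← lie_skew (leftNormedBracket _ _), ← sub_eq_add_neg]
    exact sub_mem (lie_mem_leftNormedSpan_of_mem (ih hu) c)
      (ih (lie_mem_leftNormedSpan_of_mem hu c))

theorem lie_mem_leftNormedSpan {ι : Type*} {f : ι → L} {u v : L}
    (hu : u ∈ leftNormedSpan R f) (hv : v ∈ leftNormedSpan R f) :
    ⁅u, v⁆ ∈ leftNormedSpan R f := by
  induction hv using Submodule.span_induction with
  | mem x hx =>
    obtain ⟨⟨b, m⟩, rfl⟩ := hx
    exact lie_leftNormedBracket_mem_leftNormedSpan b m hu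
  | zero => simp
  | add x y _ _ hx hy => simpa only [lie_add] using add_mem hx hy
  | smul t x _ hx => simpa only [lie_smul] using Submodule.smul_mem _ t hx

theorem lieSpan_range_le_leftNormedSpan {ι : Type*} (f : ι → L) :
    (LieSubalgebra.lieSpan R L (Set.range f)).toSubmodule ≤ leftNormedSpan R f := by
  let S : LieSubalgebra R L := { leftNormedSpan R f with lie_mem' := lie_mem_leftNormedSpan }
  refine (LieSubalgebra.lieSpan_le (K := S)).mpr ?_
  rintro _ ⟨i, rfl⟩
  exact Submodule.subset_span ⟨(i, []), rfl⟩

end LeftNormed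

theorem LieAlgebra.lie_lie_lie_lie_eq_zero_of_quotient_derivedSeries_two {R L : Type*}
    [CommRing R] [LieRing L] [LieAlgebra R L] (p q r s : L ⧸ derivedSeries R L 2) :
    ⁅⁅p, q⁆, ⁅r, s⁆⁆ = 0 := by
  obtain ⟨p, rfl⟩ := LieSubmodule.Quotient.surjective_mk' _ p
  obtain ⟨q, rfl⟩ := LieSubmodule.Quotient.surjective_mk' _ q
  obtain ⟨r, rfl⟩ := LieSubmodule.Quotient.surjective_mk' _ r
  obtain ⟨s, rfl⟩ := LieSubmodule.Quotient.surjective_mk' _ s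
  refine LieSubmodule.Quotient.mk_eq_zero'.mpr ?_
  have hD1 : ∀ x y : L, ⁅x, y⁆ ∈ derivedSeries R L 1 :=
    fun x y => LieSubmodule.lie_mem_lie (LieSubmodule.mem_top x) (LieSubmodule.mem_top y)
  exact LieSubmodule.lie_mem_lie (hD1 p q) (hD1 r s)

namespace FreeMetabelianLieAlgebra

variable {k : Type u} [Field k] {X : Type v}

variable (k X) in
noncomputable def mkLieHom : FreeLieAlgebra k X →ₗ⁅k⁆ FreeMetabelianLieAlgebra k X :=
  { (LieAlgebra.derivedSeries k (FreeLieAlgebra k X) 2).toSubmodule.mkQ with map_lie' := rfl }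

theorem lieSpan_range_of :
    LieSubalgebra.lieSpan k (FreeMetabelianLieAlgebra k X) (Set.range (of k)) = ⊤ := by
  set S := LieSubalgebra.lieSpan k (FreeMetabelianLieAlgebra k X) (Set.range (of k))
  let F : FreeLieAlgebra k X →ₗ⁅k⁆ S :=
    FreeLieAlgebra.lift k fun x => ⟨of k x, LieSubalgebra.subset_lieSpan ⟨x, rfl⟩⟩
  have hF : S.incl.comp F = mkLieHom k X :=
    FreeLieAlgebra.hom_ext fun x => congrArg Subtype.val (FreeLieAlgebra.lift_of_apply _ x)
  rw [eq_top_iff]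
  rintro z -
  obtain ⟨w, rfl⟩ := LieSubmodule.Quotient.surjective_mk' _ z
  change mkLieHom k X w ∈ S
  rw [← hF]
  exact (F w).2

theorem leftNormedBracket_of_cons_perm (a b : X) {t t' : List X} (h : t.Perm t') :
    leftNormedBracket (of k a) ((b :: t).map (of k)) =
      leftNormedBracket (of k a) ((b :: t').map (of k)) :=
  leftNormedBracket_lie_perm
    LieAlgebra.lie_lie_lie_lie_eq_zero_of_quotient_derivedSeries_two (h.map _) _ _

variable [LinearOrder X]

variable (k X) in
noncomputable def regularSpan : Submodule k (FreeMetabelianLieAlgebra k X) :=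
  Submodule.span k (Set.range (Sum.elim (of k) (RWord.toLie k)))

theorem leftNormedBracket_mem_regularSpan_of_lt {a b : X} {t : List X} (hba : b < a)
    (hbt : ∀ c ∈ t, b ≤ c) :
    leftNormedBracket (of k a) ((b :: t).map (of k)) ∈ regularSpan k X := by
  have hperm := List.perm_insertionSort (· ≤ ·) t
  rw [leftNormedBracket_of_cons_perm a b hperm.symm]
  refine Submodule.subset_span ⟨Sum.inr ⟨a, b, _, hba, ?_⟩, rfl⟩
  exact List.pairwise_cons.mpr
    ⟨fun c hc => hbt c (hperm.subset hc), List.pairwise_insertionSort _ t⟩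

theorem leftNormedBracket_mem_regularSpan_of_min_le {a b : X} {t : List X}
    (h : ∀ c ∈ t, min a b ≤ c) :
    leftNormedBracket (of k a) ((b :: t).map (of k)) ∈ regularSpan k X := by
  rcases lt_trichotomy b a with hba | rfl | hab
  · exact leftNormedBracket_mem_regularSpan_of_lt hba (by simpa [min_eq_right hba.le] using h)
  · simp [leftNormedBracket_zero]
  · have hswap : leftNormedBracket (of k a) ((b :: t).map (of k)) =
        -leftNormedBracket (of k b) ((a :: t).map (of k)) := by
      simp only [List.map_cons, leftNormedBracket_cons, ← leftNormedBracket_neg, lie_skew]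
    rw [hswap]
    exact neg_mem
      (leftNormedBracket_mem_regularSpan_of_lt hab (by simpa [min_eq_left hab.le] using h))

theorem leftNormedBracket_mem_regularSpan_of_sorted (a b : X) {t : List X}
    (ht : t.Pairwise (· ≤ ·)) :
    leftNormedBracket (of k a) ((b :: t).map (of k)) ∈ regularSpan k X := by
  rcases t with _ | ⟨m, t⟩
  · exact leftNormedBracket_mem_regularSpan_of_min_le (by simp)
  obtain ⟨hmt, -⟩ := List.pairwise_cons.mp ht
  by_cases hm : min a b ≤ m
  · refine leftNormedBracket_mem_regularSpan_of_min_le fun c hc => ?_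
    rcases List.mem_cons.mp hc with rfl | hc
    exacts [hm, hm.trans (hmt c hc)]
  obtain ⟨hma, hmb⟩ := lt_min_iff.mp (not_le.mp hm)
  have hjacobi : leftNormedBracket (of k a) ((b :: m :: t).map (of k)) =
      leftNormedBracket (of k a) ((m :: b :: t).map (of k)) -
        leftNormedBracket (of k b) ((m :: a :: t).map (of k)) := by
    simp only [List.map_cons, leftNormedBracket_cons, ← leftNormedBracket_sub]
    congr 1
    rw [lie_lie, ← lie_skew (of k a) ⁅of k b, of k m⁆, ← lie_skew (of k b) ⁅of k a, of k m⁆]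
    abel
  rw [hjacobi]
  refine sub_mem (leftNormedBracket_mem_regularSpan_of_lt hma ?_)
    (leftNormedBracket_mem_regularSpan_of_lt hmb ?_)
  exacts [List.forall_mem_cons.mpr ⟨hmb.le, hmt⟩, List.forall_mem_cons.mpr ⟨hma.le, hmt⟩]

theorem leftNormedBracket_mem_regularSpan (a : X) :
    ∀ l : List X, leftNormedBracket (of k a) (l.map (of k)) ∈ regularSpan k X
  | [] => Submodule.subset_span ⟨Sum.inl a, rfl⟩
  | b :: t => by
    rw [leftNormedBracket_of_cons_perm a b (List.perm_insertionSort (· ≤ ·) t).symm]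
    exact leftNormedBracket_mem_regularSpan_of_sorted a b (List.pairwise_insertionSort _ t)

theorem regularSpan_eq_top : regularSpan k X = ⊤ := by
  refine eq_top_iff.mpr ?_
  calc ⊤ = (LieSubalgebra.lieSpan k _ (Set.range (of k))).toSubmodule := by
          rw [lieSpan_range_of, LieSubalgebra.top_toSubmodule]
    _ ≤ leftNormedSpan k (of k) := lieSpan_range_le_leftNormedSpan _
    _ ≤ regularSpan k X := Submodule.span_le.mpr <| by
          rintro _ ⟨⟨a, l⟩, rfl⟩
          exact leftNormedBracket_mem_regularSpan a l

end FreeMetabelianLieAlgebra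

/-- Every element of the free metabelian Lie algebra `L₍₂₎(X)` is a `k`-linear combination
of images of generators and images of regular `R`-words: these elements span `L₍₂₎(X)`. -/
theorem freeMetabelian_span (k : Type u) [Field k] (X : Type v) [LinearOrder X] :
    Submodule.span k
        (Set.range (Sum.elim (fun x : X => FreeMetabelianLieAlgebra.of k x)
          (fun w : RWord X => w.toLie k))) = ⊤ :=
  FreeMetabelianLieAlgebra.regularSpan_eq_top
end

section
/- Let L be a metabelian Lie algebra over a field k and S ⊆ L. Then the Lie ideal of L generated by S coincides, as a k-submodule, with the k-linear span of all left-normed products [s, u₁, u₂, ..., uₙ] where s ∈ S, n ≥ 0 and u₁,...,uₙ ∈ L. -/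
/-- In a metabelian Lie algebra `L`, the Lie ideal generated by a subset `S` coincides, as a
`k`-submodule, with the `k`-linear span of all left-normed products `[s, u₁, …, uₙ]` with
`s ∈ S`, `n ≥ 0` and `uᵢ ∈ L`. -/
theorem lieIdeal_eq_span_leftNormed (k : Type*) [Field k] (L : Type*) [LieRing L]
    [LieAlgebra k L] (hL : LieAlgebra.derivedSeries k L 2 = ⊥) (S : Set L) :
    (LieSubmodule.lieSpan k L S).toSubmodule =
      Submodule.span k
        {x : L | ∃ s ∈ S, ∃ l : List L, x = l.foldl (fun a b => ⁅a, b⁆) s} := by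
  set T := {x : L | ∃ s ∈ S, ∃ l : List L, x = l.foldl (fun a b => ⁅a, b⁆) s} with hT
  have lie_mem : ∀ (x : L) {m : L}, m ∈ Submodule.span k T → ⁅x, m⁆ ∈ Submodule.span k T := by
    intro x m hm
    induction hm using Submodule.span_induction with
    | mem m hm =>
      obtain ⟨s, hs, l, rfl⟩ := hm
      have h1 : ⁅x, l.foldl (fun a b => ⁅a, b⁆) s⁆
          = -((l ++ [x]).foldl (fun a b => ⁅a, b⁆) s) := by
        rw [List.foldl_append]
        simp only [List.foldl_cons, List.foldl_nil]
        rw [← lie_skew]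
      rw [h1]
      exact neg_mem (Submodule.subset_span ⟨s, hs, l ++ [x], rfl⟩)
    | zero => simp
    | add a b _ _ ha hb => rw [lie_add]; exact add_mem ha hb
    | smul c a _ ha => rw [lie_smul]; exact Submodule.smul_mem _ _ ha
  let N : LieSubmodule k L L :=
    { toSubmodule := Submodule.span k T
      lie_mem := fun {x m} hm => lie_mem x hm }
  apply le_antisymm
  · have h : LieSubmodule.lieSpan k L S ≤ N :=
      LieSubmodule.lieSpan_le.mpr (fun s hs => Submodule.subset_span ⟨s, hs, [], rfl⟩)
    exact h
  · rw [Submodule.span_le]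
    rintro x ⟨s, hs, l, rfl⟩
    have hmem : ∀ (l : List L) (s : L), s ∈ LieSubmodule.lieSpan k L S →
        l.foldl (fun a b => ⁅a, b⁆) s ∈ LieSubmodule.lieSpan k L S := by
      intro l
      induction l with
      | nil => intro s hs; exact hs
      | cons a l ih =>
        intro s hs
        refine ih ⁅s, a⁆ ?_
        rw [← lie_skew]
        exact neg_mem ((LieSubmodule.lieSpan k L S).lie_mem hs)
    exact hmem l s (LieSubmodule.subset_lieSpan hs)
end

section
/- Let k be a field, X a linearly ordered set, and S a subset of the free metabelian Lie algebra L₍₂₎(X). Then every element of the Lie ideal of L₍₂₎(X) generated by S is a k-linear combination of elements of the following two forms: (i) [s, a₁, a₂, ..., aₙ] where s ∈ S, n ≥ 0, aᵢ ∈ X and a₁ ≤ a₂ ≤ ⋯ ≤ aₙ (left-normed product of s with a nondecreasing sequence of generators); (ii) ⁅u, s⁆ where s ∈ S and u is the image in L₍₂₎(X) of a regular R-word. -/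
/-! Let `P` be the span of the words (i) and (ii). It contains `S`, so it suffices that `P` is an
ideal; since `{x | ⁅x, P⁆ ⊆ P}` is a subalgebra and `L₍₂₎(X)` is generated by `X`, it is enough
that `⁅P, a⁆ ⊆ P` for every generator `a`. By the metabelian identity `⁅⁅a, b⁆, ⁅c, d⁆⁆ = 0`, the
letters `a₁, …, aₙ` of a word `[p, q, a₁, …, aₙ]` commute, so an appended letter can be sorted
into place. If it is smaller than the letter it has to pass, one Jacobi identity splits the word
into a word of form (i) and a word `[⁅c, b⁆, s, …]` with `c > b`, and the same commutation moves
`s` to the end, giving a combination of words of form (ii). -/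

theorem lie_lie_eq_lie_lie_sub_lie_lie {L : Type*} [LieRing L] (a b c : L) :
    ⁅⁅a, b⁆, c⁆ = ⁅⁅a, c⁆, b⁆ - ⁅⁅b, c⁆, a⁆ := by
  rw [lie_lie, ← lie_skew a ⁅b, c⁆, ← lie_skew b ⁅a, c⁆]
  abel

theorem List.Pairwise.cons_orderedInsert {α : Type*} {r : α → α → Prop} [DecidableRel r]
    [Std.Total r] [IsTrans α r] {a b : α} {l : List α} (hl : (a :: l).Pairwise r) (h : r a b) :
    (a :: l.orderedInsert r b).Pairwise r := by
  rw [List.pairwise_cons] at hl ⊢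
  refine ⟨fun x hx => ?_, hl.2.orderedInsert b l⟩
  rcases (List.mem_orderedInsert r).mp hx with rfl | hx
  exacts [h, hl.1 x hx]

section LieSpan

variable {R L : Type*} [CommRing R] [LieRing L] [LieAlgebra R L]

theorem lie_mem_of_mem_span {s : Set L} {p : Submodule R L} {y : L}
    (h : ∀ u ∈ s, ⁅u, y⁆ ∈ p) {u : L} (hu : u ∈ Submodule.span R s) : ⁅u, y⁆ ∈ p := by
  induction hu using Submodule.span_induction with
  | mem u hu => exact h u hu
  | zero => rw [zero_lie]; exact p.zero_mem
  | add u v _ _ hu hv => rw [add_lie]; exact add_mem hu hv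
  | smul c u _ hu => rw [smul_lie]; exact p.smul_mem c hu

def Submodule.lieIdealizer (P : Submodule R L) : LieSubalgebra R L where
  carrier := {x | ∀ t ∈ P, ⁅x, t⁆ ∈ P}
  add_mem' hx hy t ht := by rw [add_lie]; exact add_mem (hx t ht) (hy t ht)
  zero_mem' t _ := by rw [zero_lie]; exact P.zero_mem
  smul_mem' c x hx t ht := by rw [smul_lie]; exact P.smul_mem c (hx t ht)
  lie_mem' hx hy t ht := by rw [lie_lie]; exact sub_mem (hx _ (hy t ht)) (hy _ (hx t ht))

end LieSpan

namespace FreeMetabelianLieAlgebra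

variable {k : Type u} [Field k] {X : Type v}

theorem lie_lie_lie_lie_eq_zero (a b c d : FreeMetabelianLieAlgebra k X) :
    ⁅⁅a, b⁆, ⁅c, d⁆⁆ = 0 := by
  obtain ⟨a, rfl⟩ := LieSubmodule.Quotient.surjective_mk' _ a
  obtain ⟨b, rfl⟩ := LieSubmodule.Quotient.surjective_mk' _ b
  obtain ⟨c, rfl⟩ := LieSubmodule.Quotient.surjective_mk' _ c
  obtain ⟨d, rfl⟩ := LieSubmodule.Quotient.surjective_mk' _ d
  refine (LieSubmodule.Quotient.mk_eq_zero _).mpr ?_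
  rw [LieAlgebra.derivedSeries_def, LieAlgebra.derivedSeriesOfIdeal_succ,
    LieAlgebra.derivedSeriesOfIdeal_succ, LieAlgebra.derivedSeriesOfIdeal_zero]
  open LieSubmodule in
  exact lie_mem_lie (lie_mem_lie (mem_top a) (mem_top b)) (lie_mem_lie (mem_top c) (mem_top d))

theorem lieSubalgebra_eq_top_of_forall_of_mem (K : LieSubalgebra k (FreeMetabelianLieAlgebra k X))
    (h : ∀ x, of k x ∈ K) : K = ⊤ := by
  let I := LieAlgebra.derivedSeries k (FreeLieAlgebra k X) 2
  let π : FreeLieAlgebra k X →ₗ⁅k⁆ FreeMetabelianLieAlgebra k X :=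
    { I.toSubmodule.mkQ with map_lie' := rfl }
  let f : X → K := fun x => ⟨of k x, h x⟩
  have hπ : π = K.incl.comp (FreeLieAlgebra.lift k f) :=
    FreeLieAlgebra.hom_ext fun x => by
      rw [LieHom.comp_apply, FreeLieAlgebra.lift_of_apply]; rfl
  refine eq_top_iff.mpr fun y _ => ?_
  obtain ⟨z, rfl⟩ := I.toSubmodule.mkQ_surjective y
  exact (LieHom.congr_fun hπ z).symm ▸ (FreeLieAlgebra.lift k f z).2

theorem lie_mem_of_forall_of_lie_mem (P : Submodule k (FreeMetabelianLieAlgebra k X))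
    (h : ∀ a : X, ∀ t ∈ P, ⁅of k a, t⁆ ∈ P) (x : FreeMetabelianLieAlgebra k X) {t}
    (ht : t ∈ P) : ⁅x, t⁆ ∈ P := by
  have : P.lieIdealizer = ⊤ := lieSubalgebra_eq_top_of_forall_of_mem _ h
  exact (this ▸ LieSubalgebra.mem_top x : x ∈ P.lieIdealizer) t ht

variable (k) in
noncomputable def lieFold (s : FreeMetabelianLieAlgebra k X) (l : List X) :
    FreeMetabelianLieAlgebra k X :=
  (l.map (of k)).foldl (fun a b => ⁅a, b⁆) s

theorem lieFold_cons (s : FreeMetabelianLieAlgebra k X) (a : X) (l : List X) :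
    lieFold k s (a :: l) = lieFold k ⁅s, of k a⁆ l := rfl

theorem lieFold_concat (s : FreeMetabelianLieAlgebra k X) (l : List X) (b : X) :
    lieFold k s (l ++ [b]) = ⁅lieFold k s l, of k b⁆ := by
  simp [lieFold, List.foldl_append]

theorem lieFold_sub (s t : FreeMetabelianLieAlgebra k X) (l : List X) :
    lieFold k (s - t) l = lieFold k s l - lieFold k t l := by
  induction l generalizing s t with
  | nil => rfl
  | cons a l ih => rw [lieFold_cons, lieFold_cons, lieFold_cons, ← ih, sub_lie]

theorem lie_lieFold_lie_lie_eq_zero (p q c d : FreeMetabelianLieAlgebra k X) (l : List X) :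
    ⁅lieFold k ⁅p, q⁆ l, ⁅c, d⁆⁆ = 0 := by
  induction l generalizing p q with
  | nil => exact lie_lie_lie_lie_eq_zero p q c d
  | cons a l ih => exact ih _ _

theorem lieFold_lie_perm {l₁ l₂ : List X} (h : l₁.Perm l₂) (p q : FreeMetabelianLieAlgebra k X) :
    lieFold k ⁅p, q⁆ l₁ = lieFold k ⁅p, q⁆ l₂ := by
  induction h generalizing p q with
  | nil => rfl
  | cons x _ ih => exact ih _ _
  | swap x y l =>
    simp only [lieFold_cons]
    rw [lie_lie _ (of k y), lie_lie_lie_lie_eq_zero, zero_sub, ← lie_skew, neg_neg]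
  | trans _ _ ih₁ ih₂ => rw [ih₁, ih₂]

theorem lieFold_lie_concat_eq_sub (p : FreeMetabelianLieAlgebra k X) (a b : X) (l : List X) :
    lieFold k ⁅p, of k a⁆ (l ++ [b]) =
      lieFold k ⁅p, of k b⁆ (a :: l) - lieFold k ⁅⁅of k a, of k b⁆, p⁆ l := by
  rw [lieFold_lie_perm (List.perm_append_singleton b l), lieFold_cons,
    lie_lie_eq_lie_lie_sub_lie_lie, lieFold_sub, lieFold_cons]

section NormalWords

variable [LinearOrder X]

theorem lieFold_lie_concat (p q : FreeMetabelianLieAlgebra k X) (l : List X) (b : X) :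
    lieFold k ⁅p, q⁆ (l ++ [b]) = lieFold k ⁅p, q⁆ (l.orderedInsert (· ≤ ·) b) :=
  lieFold_lie_perm ((List.perm_append_singleton b l).trans (l.perm_orderedInsert _ b).symm) p q

variable (k X) in
noncomputable def rWordSpan : Submodule k (FreeMetabelianLieAlgebra k X) :=
  Submodule.span k (Set.range (RWord.toLie k))

theorem lieFold_mem_rWordSpan {a₀ a₁ : X} {rest : List X} (h : a₁ < a₀)
    (hs : (a₁ :: rest).Pairwise (· ≤ ·)) : lieFold k ⁅of k a₀, of k a₁⁆ rest ∈ rWordSpan k X :=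
  Submodule.subset_span ⟨⟨a₀, a₁, rest, h, hs⟩, rfl⟩

theorem lie_of_of_mem_rWordSpan (a b : X) : ⁅of k a, of k b⁆ ∈ rWordSpan k X := by
  rcases lt_trichotomy a b with h | rfl | h
  · rw [← lie_skew]
    exact neg_mem (lieFold_mem_rWordSpan (rest := []) h (List.pairwise_singleton _ a))
  · rw [lie_self]
    exact zero_mem _
  · exact lieFold_mem_rWordSpan (rest := []) h (List.pairwise_singleton _ b)

theorem _root_.RWord.lie_of_mem_rWordSpan (w : RWord X) (b : X) :
    ⁅w.toLie k, of k b⁆ ∈ rWordSpan k X := by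
  obtain ⟨a₀, a₁, rest, hlt, hs⟩ := w
  change ⁅lieFold k ⁅of k a₀, of k a₁⁆ rest, of k b⁆ ∈ _
  rw [← lieFold_concat]
  rcases le_or_gt a₁ b with hb | hb
  · rw [lieFold_lie_concat]
    exact lieFold_mem_rWordSpan hlt (hs.cons_orderedInsert hb)
  · have hb_rest : (b :: rest).Pairwise (· ≤ ·) :=
      (hs.cons_cons_of_trans hb.le).sublist ((List.sublist_cons_self _ _).cons_cons _)
    have h₂ : lieFold k ⁅⁅of k a₁, of k b⁆, of k a₀⁆ rest =
        lieFold k ⁅of k a₁, of k b⁆ (rest.orderedInsert (· ≤ ·) a₀) :=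
      lieFold_lie_perm (rest.perm_orderedInsert _ a₀).symm _ _
    rw [lieFold_lie_concat_eq_sub, h₂]
    exact sub_mem (lieFold_mem_rWordSpan (hb.trans hlt) (hs.cons_cons_of_trans hb.le))
      (lieFold_mem_rWordSpan hb (hb_rest.cons_orderedInsert (hb.trans hlt).le))

theorem lie_of_mem_rWordSpan {u : FreeMetabelianLieAlgebra k X} (hu : u ∈ rWordSpan k X)
    (b : X) : ⁅u, of k b⁆ ∈ rWordSpan k X :=
  lie_mem_of_mem_span (by rintro _ ⟨w, rfl⟩; exact w.lie_of_mem_rWordSpan b) hu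

theorem lie_lie_right_comm_of_mem_rWordSpan {u : FreeMetabelianLieAlgebra k X}
    (hu : u ∈ rWordSpan k X) (s y : FreeMetabelianLieAlgebra k X) :
    ⁅⁅u, s⁆, y⁆ = ⁅⁅u, y⁆, s⁆ := by
  have h : ⁅u, ⁅s, y⁆⁆ = 0 := (Submodule.mem_bot k).mp <| lie_mem_of_mem_span (by
    rintro _ ⟨w, rfl⟩
    exact (Submodule.mem_bot k).mpr (lie_lieFold_lie_lie_eq_zero _ _ s y w.rest)) hu
  rw [lie_lie_eq_lie_lie_sub_lie_lie, ← lie_skew ⁅s, y⁆ u, h, neg_zero, sub_zero]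

variable (k) in
noncomputable def normalWordSpan (S : Set (FreeMetabelianLieAlgebra k X)) :
    Submodule k (FreeMetabelianLieAlgebra k X) :=
  Submodule.span k
    ({x | ∃ s ∈ S, ∃ l : List X, l.Pairwise (· ≤ ·) ∧ x = lieFold k s l} ∪
      {x | ∃ s ∈ S, ∃ w : RWord X, x = ⁅w.toLie k, s⁆})

variable {S : Set (FreeMetabelianLieAlgebra k X)} {s u : FreeMetabelianLieAlgebra k X}

theorem lieFold_mem_normalWordSpan (hs : s ∈ S) {l : List X} (hl : l.Pairwise (· ≤ ·)) :
    lieFold k s l ∈ normalWordSpan k S :=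
  Submodule.subset_span (.inl ⟨s, hs, l, hl, rfl⟩)

theorem lie_mem_normalWordSpan_of_mem_rWordSpan (hu : u ∈ rWordSpan k X) (hs : s ∈ S) :
    ⁅u, s⁆ ∈ normalWordSpan k S :=
  lie_mem_of_mem_span (by rintro _ ⟨w, rfl⟩; exact Submodule.subset_span (.inr ⟨s, hs, w, rfl⟩)) hu

theorem lieFold_lie_mem_normalWordSpan (l : List X) (hu : u ∈ rWordSpan k X) (hs : s ∈ S) :
    lieFold k ⁅u, s⁆ l ∈ normalWordSpan k S := by
  induction l generalizing u with
  | nil => exact lie_mem_normalWordSpan_of_mem_rWordSpan hu hs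
  | cons a l ih =>
    rw [lieFold_cons, lie_lie_right_comm_of_mem_rWordSpan hu]
    exact ih (lie_of_mem_rWordSpan hu a)

theorem lie_of_mem_normalWordSpan (hs : s ∈ S) {l : List X} (hl : l.Pairwise (· ≤ ·)) (b : X) :
    ⁅lieFold k s l, of k b⁆ ∈ normalWordSpan k S := by
  rw [← lieFold_concat]
  cases l with
  | nil => exact lieFold_mem_normalWordSpan hs (List.pairwise_singleton _ b)
  | cons c l =>
    rw [List.cons_append, lieFold_cons]
    rcases le_or_gt c b with hb | hb
    · rw [lieFold_lie_concat]
      exact lieFold_mem_normalWordSpan hs (hl.cons_orderedInsert hb)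
    · rw [lieFold_lie_concat_eq_sub]
      exact sub_mem (lieFold_mem_normalWordSpan hs (hl.cons_cons_of_trans hb.le))
        (lieFold_lie_mem_normalWordSpan l (lie_of_of_mem_rWordSpan c b) hs)

theorem of_lie_mem_normalWordSpan (a : X) {t : FreeMetabelianLieAlgebra k X}
    (ht : t ∈ normalWordSpan k S) : ⁅of k a, t⁆ ∈ normalWordSpan k S := by
  rw [← lie_skew]
  refine neg_mem (lie_mem_of_mem_span ?_ ht)
  rintro _ (⟨s, hs, l, hl, rfl⟩ | ⟨s, hs, w, rfl⟩)
  · exact lie_of_mem_normalWordSpan hs hl a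
  · rw [lie_lie_right_comm_of_mem_rWordSpan (Submodule.subset_span ⟨w, rfl⟩)]
    exact lie_mem_normalWordSpan_of_mem_rWordSpan (w.lie_of_mem_rWordSpan a) hs

end NormalWords

end FreeMetabelianLieAlgebra

/-- Every element of the Lie ideal of `L₍₂₎(X)` generated by `S` is a `k`-linear combination
of elements of the two forms: (i) `[s, a₁, …, aₙ]` with `s ∈ S` and `a₁ ≤ ⋯ ≤ aₙ` a
nondecreasing list of generators (`n ≥ 0`), and (ii) `⁅u, s⁆` with `s ∈ S` and `u` the
image of a regular `R`-word. -/
theorem lieIdeal_le_span_normal_words (k : Type u) [Field k] (X : Type v) [LinearOrder X]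
    (S : Set (FreeMetabelianLieAlgebra k X)) :
    (LieSubmodule.lieSpan k (FreeMetabelianLieAlgebra k X) S).toSubmodule ≤
      Submodule.span k
        ({x | ∃ s ∈ S, ∃ l : List X, l.Pairwise (· ≤ ·) ∧
            x = (l.map (FreeMetabelianLieAlgebra.of k)).foldl (fun a b => ⁅a, b⁆) s} ∪
          {x | ∃ s ∈ S, ∃ w : RWord X, x = ⁅w.toLie k, s⁆}) := by
  let I : LieIdeal k (FreeMetabelianLieAlgebra k X) :=
    { FreeMetabelianLieAlgebra.normalWordSpan k S with
      lie_mem := fun ht => FreeMetabelianLieAlgebra.lie_mem_of_forall_of_lie_mem _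
        (fun a _ => FreeMetabelianLieAlgebra.of_lie_mem_normalWordSpan a) _ ht }
  have hI : LieSubmodule.lieSpan k _ S ≤ I := LieSubmodule.lieSpan_le.mpr fun _ hs =>
    FreeMetabelianLieAlgebra.lieFold_mem_normalWordSpan hs .nil
  exact hI
end

section
/- Let X be a linearly ordered set and let u = (a₁,...,aₙ) and v = (b₁,...,bₙ) be two nondecreasing (sorted) lists over X of the same length n with u strictly greater than v in the lexicographic order. Then for every c ∈ X, the sorted list obtained by inserting c into u in order is strictly greater in the lexicographic order than the sorted list obtained by inserting c into v in order. (In other words, the degree-lexicographic ordering on the free commutative monoid on X is a monomial ordering.) -/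
theorem lex_orderedInsert_cons_of_lt {X : Type*} [LinearOrder X] {a b : X} (hab : a < b)
    (l₁ l₂ : List X) (c : X) :
    List.Lex (· < ·) ((a :: l₁).orderedInsert (· ≤ ·) c) ((b :: l₂).orderedInsert (· ≤ ·) c) := by
  simp only [List.orderedInsert_cons]
  split_ifs with hca hcb hcb
  · exact .cons (.rel hab)
  · exact absurd (hca.trans hab.le) hcb
  · exact .rel (lt_of_not_ge hca)
  · exact .rel hab

theorem orderedInsert_lex_mono_general (X : Type*) [LinearOrder X] (u v : List X) (c : X)
    (hlen : u.length = v.length)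
    (h : List.Lex (· < ·) v u) :
    List.Lex (· < ·) (v.orderedInsert (· ≤ ·) c) (u.orderedInsert (· ≤ ·) c) := by
  induction h with
  | nil => simp at hlen
  | cons hl ih =>
    simp only [List.orderedInsert_cons]
    split_ifs
    · exact .cons (.cons hl)
    · exact .cons (ih (by simpa using hlen))
  | rel hab => exact lex_orderedInsert_cons_of_lt hab _ _ c

/-- The degree-lexicographic ordering on the free commutative monoid on a linearly ordered
set `X` is monomial: if `u` and `v` are sorted lists of the same length with `v < u`
lexicographically, then for any `c`, inserting `c` in order into `v` yields a list that is
lexicographically smaller than the one obtained by inserting `c` in order into `u`. -/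
theorem orderedInsert_lex_mono (X : Type*) [LinearOrder X] (u v : List X) (c : X)
    (hu : u.Pairwise (· ≤ ·)) (hv : v.Pairwise (· ≤ ·)) (hlen : u.length = v.length)
    (h : List.Lex (· < ·) v u) :
    List.Lex (· < ·) (v.orderedInsert (· ≤ ·) c) (u.orderedInsert (· ≤ ·) c) :=
  orderedInsert_lex_mono_general X u v c hlen h
end

section
/- Let k be a field, n ≥ 4, and let ML_{Circ_n} be the quotient of the free metabelian Lie algebra L₍₂₎(Z/nZ) over k by the Lie ideal generated by the brackets ⁅i+1, i⁆ for all i ∈ Z/nZ. Then for every integer j with 2 ≤ j ≤ n−2, the image in ML_{Circ_n} of the left-normed bracket [j, 0, j+1, j+2, ..., n−1] is zero. -/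
/-! In a metabelian Lie algebra the operators `ad a` commute on the derived algebra, so in a
left-normed bracket starting with a commutator the later entries may be permuted freely. The
relation `⁅m + 1, m⁆ = 0` and the Jacobi identity give `⁅⁅m, 0⁆, m + 1⁆ = ⁅⁅m + 1, 0⁆, m⁆`, hence
`[m, 0, m + 1, …, n − 1] = ⁅[m + 1, 0, m + 2, …, n − 1], m⁆`. Iterating, the innermost bracket
becomes `⁅n − 1, 0⁆`, which vanishes because `n − 1` and `0` are adjacent in the circuit. -/

def LieRing.IsMetabelian (L : Type*) [LieRing L] : Prop :=
  ∀ a b x y : L, ⁅⁅a, b⁆, ⁅x, y⁆⁆ = 0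

section LieRing

variable {L : Type*} [LieRing L]

theorem lie_lie_comm_of_lie_eq_zero {a b : L} (h : ⁅b, a⁆ = 0) (z : L) :
    ⁅⁅a, z⁆, b⁆ = ⁅⁅b, z⁆, a⁆ := by
  have jacobi := leibniz_lie b z a
  rw [h, lie_zero, add_zero] at jacobi
  rw [← jacobi, ← lie_skew b, ← lie_skew z a, neg_lie, neg_neg]

namespace LieRing.IsMetabelian

theorem lie_lie_right_comm (hL : IsMetabelian L) (x y a b : L) :
    ⁅⁅⁅x, y⁆, a⁆, b⁆ = ⁅⁅⁅x, y⁆, b⁆, a⁆ := by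
  have jacobi := leibniz_lie ⁅x, y⁆ a b
  rw [hL, ← lie_skew a] at jacobi
  exact add_neg_eq_zero.mp jacobi.symm

theorem foldl_lie_lie (hL : IsMetabelian L) (l : List L) (x y a : L) :
    l.foldl (⁅·, ·⁆) ⁅⁅x, y⁆, a⁆ = ⁅l.foldl (⁅·, ·⁆) ⁅x, y⁆, a⁆ := by
  induction l generalizing x y with
  | nil => rfl
  | cons b l ih => rw [List.foldl_cons, List.foldl_cons, hL.lie_lie_right_comm, ih]

theorem foldl_lie_map_range'_eq_zero (hL : IsMetabelian L) (c : ℕ → L)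
    (hc : ∀ m, ⁅c (m + 1), c m⁆ = 0) {N : ℕ} (hN : ⁅c N, c 0⁆ = 0) (m d : ℕ) (hmd : m + d = N) :
    ((List.range' (m + 1) d).map c).foldl (⁅·, ·⁆) ⁅c m, c 0⁆ = 0 := by
  induction d generalizing m with
  | zero =>
    obtain rfl : m = N := hmd
    exact hN
  | succ d ih =>
    rw [List.range'_succ, List.map_cons, List.foldl_cons, lie_lie_comm_of_lie_eq_zero (hc m),
      hL.foldl_lie_lie, ih (m + 1) (by omega), zero_lie]

theorem quotient {R : Type*} [CommRing R] [LieAlgebra R L] (hL : IsMetabelian L)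
    (I : LieIdeal R L) :
    IsMetabelian (L ⧸ I) := by
  rintro ⟨a⟩ ⟨b⟩ ⟨x⟩ ⟨y⟩
  exact congrArg LieSubmodule.Quotient.mk (hL a b x y)

end LieRing.IsMetabelian

end LieRing

section LieAlgebra

variable {R L : Type*} [CommRing R] [LieRing L] [LieAlgebra R L]

theorem LieAlgebra.lie_lie_mem_derivedSeries_two (a b x y : L) :
    ⁅⁅a, b⁆, ⁅x, y⁆⁆ ∈ LieAlgebra.derivedSeries R L 2 := by
  rw [LieAlgebra.derivedSeries_def, LieAlgebra.derivedSeriesOfIdeal_succ]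
  refine LieSubmodule.lie_mem_lie ?_ ?_ <;>
  · rw [LieAlgebra.derivedSeriesOfIdeal_succ, LieAlgebra.derivedSeriesOfIdeal_zero]
    exact LieSubmodule.lie_mem_lie trivial trivial

theorem LieAlgebra.isMetabelian_quotient_derivedSeries_two :
    LieRing.IsMetabelian (L ⧸ LieAlgebra.derivedSeries R L 2) := by
  rintro ⟨a⟩ ⟨b⟩ ⟨x⟩ ⟨y⟩
  exact LieSubmodule.Quotient.mk_eq_zero'.2 (lie_lie_mem_derivedSeries_two a b x y)

theorem LieSubmodule.Quotient.mk_foldl_lie (I : LieIdeal R L) (l : List L) (x : L) :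
    (mk (l.foldl (⁅·, ·⁆) x) : L ⧸ I) = (l.map mk).foldl (⁅·, ·⁆) (mk x) := by
  rw [List.foldl_map]
  exact (List.foldl_hom _ fun _ _ => rfl).symm

end LieAlgebra

theorem circuit_gsbasis_relation_general (k : Type u) [Field k] (n : ℕ)
    (j : ℕ) (hjn : j ≤ n - 2) :
    letI I : LieIdeal k (FreeMetabelianLieAlgebra k (ZMod n)) :=
      LieSubmodule.lieSpan k (FreeMetabelianLieAlgebra k (ZMod n))
        {x | ∃ i : ZMod n,
          x = ⁅FreeMetabelianLieAlgebra.of k (i + 1), FreeMetabelianLieAlgebra.of k i⁆}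
    LieSubmodule.Quotient.mk (N := I)
        ((((0 : ZMod n) ::
              (List.range (n - 1 - j)).map (fun t => ((j + 1 + t : ℕ) : ZMod n))).map
            (FreeMetabelianLieAlgebra.of k)).foldl (fun a b => ⁅a, b⁆)
          (FreeMetabelianLieAlgebra.of k ((j : ℕ) : ZMod n))) = 0 := by
  generalize hI : LieSubmodule.lieSpan k (FreeMetabelianLieAlgebra k (ZMod n))
    (_ : Set (FreeMetabelianLieAlgebra k (ZMod n))) = I
  set c : ℕ → FreeMetabelianLieAlgebra k (ZMod n) ⧸ I := fun m =>
    LieSubmodule.Quotient.mk (FreeMetabelianLieAlgebra.of k (m : ZMod n))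
  have hc : ∀ m : ℕ, ⁅c (m + 1), c m⁆ = 0 := fun m => by
    simp only [c, Nat.cast_succ, ← LieSubmodule.Quotient.mk_bracket]
    exact LieSubmodule.Quotient.mk_eq_zero'.2 (hI ▸ LieSubmodule.subset_lieSpan ⟨m, rfl⟩)
  have hN : ⁅c (n - 1), c 0⁆ = 0 := by
    rcases n with _ | n
    · exact lie_self _
    · rw [Nat.add_sub_cancel, ← lie_skew, neg_eq_zero]
      simpa [c] using hc n
  have hQ : LieRing.IsMetabelian (FreeMetabelianLieAlgebra k (ZMod n) ⧸ I) :=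
    LieAlgebra.isMetabelian_quotient_derivedSeries_two.quotient I
  have hbracket := hQ.foldl_lie_map_range'_eq_zero c hc hN j (n - 1 - j) (by omega)
  rw [List.range'_eq_map_range, List.map_map] at hbracket
  rw [LieSubmodule.Quotient.mk_foldl_lie]
  simpa [c, Function.comp_def] using hbracket

/-- In the partial commutative metabelian Lie algebra related to the circuit `Circ_n`
(`n ≥ 4`), i.e. the quotient of `L₍₂₎(ℤ/nℤ)` by the ideal generated by the brackets
`⁅i+1, i⁆`, the image of the left-normed bracket `[j, 0, j+1, j+2, …, n−1]` is zero for
every `2 ≤ j ≤ n − 2`. -/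
theorem circuit_gsbasis_relation (k : Type u) [Field k] (n : ℕ) (hn : 4 ≤ n)
    (j : ℕ) (hj2 : 2 ≤ j) (hjn : j ≤ n - 2) :
    letI I : LieIdeal k (FreeMetabelianLieAlgebra k (ZMod n)) :=
      LieSubmodule.lieSpan k (FreeMetabelianLieAlgebra k (ZMod n))
        {x | ∃ i : ZMod n,
          x = ⁅FreeMetabelianLieAlgebra.of k (i + 1), FreeMetabelianLieAlgebra.of k i⁆}
    LieSubmodule.Quotient.mk (N := I)
        ((((0 : ZMod n) ::
              (List.range (n - 1 - j)).map (fun t => ((j + 1 + t : ℕ) : ZMod n))).map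
            (FreeMetabelianLieAlgebra.of k)).foldl (fun a b => ⁅a, b⁆)
          (FreeMetabelianLieAlgebra.of k ((j : ℕ) : ZMod n))) = 0 :=
  circuit_gsbasis_relation_general k n j hjn
end

section
/- Let k be a field, let V₃ = {0,1}³ with Hamming distance d, and let ML_{Cu₃} be the quotient of the free metabelian Lie algebra L₍₂₎(V₃) over k by the Lie ideal generated by all brackets ⁅ε,δ⁆ with d(ε,δ) = 1. Then for all ε, δ, μ, γ ∈ V₃ with d(ε,δ) = 3, d(μ,ε) = 1, d(μ,δ) = 2, d(γ,μ) = 1 and d(γ,δ) = 1, the image in ML_{Cu₃} of the left-normed bracket [⁅ε,δ⁆, μ, γ] is zero. -/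
/-- The Lie ideal of `L₍₂₎({0,1}³)` generated by the brackets of pairs of vertices of the
3-cube at Hamming distance 1. -/
noncomputable def cubeIdeal (k : Type u) [Field k] :
    LieIdeal k (FreeMetabelianLieAlgebra k (Fin 3 → Bool)) :=
  LieSubmodule.lieSpan k (FreeMetabelianLieAlgebra k (Fin 3 → Bool))
    {x | ∃ ε δ : Fin 3 → Bool, hammingDist ε δ = 1 ∧
      x = ⁅FreeMetabelianLieAlgebra.of k ε, FreeMetabelianLieAlgebra.of k δ⁆}


lemma metab_free (k : Type u) [Field k] (X : Type v)
    (a b c d : FreeLieAlgebra k X) :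
    ⁅⁅a,b⁆,⁅c,d⁆⁆ ∈ LieAlgebra.derivedSeries k (FreeLieAlgebra k X) 2 := by
  have e1 : LieAlgebra.derivedSeries k (FreeLieAlgebra k X) 1 =
      ⁅(⊤ : LieIdeal k (FreeLieAlgebra k X)), (⊤ : LieIdeal k (FreeLieAlgebra k X))⁆ := by
    rw [LieAlgebra.derivedSeries_def, LieAlgebra.derivedSeriesOfIdeal_succ,
      LieAlgebra.derivedSeriesOfIdeal_zero]
  have e2 : LieAlgebra.derivedSeries k (FreeLieAlgebra k X) 2 =
      ⁅LieAlgebra.derivedSeries k (FreeLieAlgebra k X) 1,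
        LieAlgebra.derivedSeries k (FreeLieAlgebra k X) 1⁆ := by
    rw [LieAlgebra.derivedSeries_def, LieAlgebra.derivedSeriesOfIdeal_succ,
      ← LieAlgebra.derivedSeries_def]
  have h1 : ∀ x y : FreeLieAlgebra k X,
      ⁅x,y⁆ ∈ LieAlgebra.derivedSeries k (FreeLieAlgebra k X) 1 := fun x y => by
    rw [e1]; exact LieSubmodule.lie_mem_lie (LieSubmodule.mem_top x) (LieSubmodule.mem_top y)
  rw [e2]
  exact LieSubmodule.lie_mem_lie (h1 a b) (h1 c d)

lemma metab_quot (k : Type u) [Field k] (X : Type v)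
    (a b c d : FreeMetabelianLieAlgebra k X) : ⁅⁅a,b⁆,⁅c,d⁆⁆ = 0 := by
  set N := LieAlgebra.derivedSeries k (FreeLieAlgebra k X) 2
  obtain ⟨a', rfl⟩ := LieSubmodule.Quotient.surjective_mk' N a
  obtain ⟨b', rfl⟩ := LieSubmodule.Quotient.surjective_mk' N b
  obtain ⟨c', rfl⟩ := LieSubmodule.Quotient.surjective_mk' N c
  obtain ⟨d', rfl⟩ := LieSubmodule.Quotient.surjective_mk' N d
  show (LieSubmodule.Quotient.mk (N := N) ⁅⁅a',b'⁆,⁅c',d'⁆⁆) = 0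
  rw [LieSubmodule.Quotient.mk_eq_zero']
  exact metab_free k X a' b' c' d'

/-- In the partial commutative metabelian Lie algebra of the 3-cube, the image of the
left-normed bracket `[⁅ε,δ⁆, μ, γ]` is zero whenever `d(ε,δ) = 3`, `d(μ,ε) = 1`,
`d(μ,δ) = 2`, `d(γ,μ) = 1` and `d(γ,δ) = 1`. -/
theorem cube_relation_R4 (k : Type u) [Field k] (ε δ μ γ : Fin 3 → Bool)
    (h1 : hammingDist ε δ = 3) (h2 : hammingDist μ ε = 1) (h3 : hammingDist μ δ = 2)
    (h4 : hammingDist γ μ = 1) (h5 : hammingDist γ δ = 1) :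
    LieSubmodule.Quotient.mk (N := cubeIdeal k)
        ⁅⁅⁅FreeMetabelianLieAlgebra.of k ε, FreeMetabelianLieAlgebra.of k δ⁆,
            FreeMetabelianLieAlgebra.of k μ⁆, FreeMetabelianLieAlgebra.of k γ⁆ = 0 := by
  have metab : ∀ a b c d : FreeMetabelianLieAlgebra k (Fin 3 → Bool) ⧸ cubeIdeal k, ⁅⁅a,b⁆,⁅c,d⁆⁆ = 0 := by
    intro a b c d
    obtain ⟨a', rfl⟩ := LieSubmodule.Quotient.surjective_mk' (cubeIdeal k) a
    obtain ⟨b', rfl⟩ := LieSubmodule.Quotient.surjective_mk' (cubeIdeal k) b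
    obtain ⟨c', rfl⟩ := LieSubmodule.Quotient.surjective_mk' (cubeIdeal k) c
    obtain ⟨d', rfl⟩ := LieSubmodule.Quotient.surjective_mk' (cubeIdeal k) d
    show (LieSubmodule.Quotient.mk (N := cubeIdeal k) ⁅⁅a',b'⁆,⁅c',d'⁆⁆) = 0
    rw [metab_quot, LieSubmodule.Quotient.mk_eq_zero']
    exact (cubeIdeal k).zero_mem
  have dist1 : ∀ α β : Fin 3 → Bool, hammingDist α β = 1 →
      (⁅LieSubmodule.Quotient.mk (N := cubeIdeal k) (FreeMetabelianLieAlgebra.of k α),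
        LieSubmodule.Quotient.mk (N := cubeIdeal k) (FreeMetabelianLieAlgebra.of k β)⁆ : FreeMetabelianLieAlgebra k (Fin 3 → Bool) ⧸ cubeIdeal k) = 0 := by
    intro α β h
    rw [← LieSubmodule.Quotient.mk_bracket, LieSubmodule.Quotient.mk_eq_zero']
    exact LieSubmodule.subset_lieSpan ⟨α, β, h, rfl⟩
  set e : FreeMetabelianLieAlgebra k (Fin 3 → Bool) ⧸ cubeIdeal k := LieSubmodule.Quotient.mk (N := cubeIdeal k) (FreeMetabelianLieAlgebra.of k ε)
  set d : FreeMetabelianLieAlgebra k (Fin 3 → Bool) ⧸ cubeIdeal k := LieSubmodule.Quotient.mk (N := cubeIdeal k) (FreeMetabelianLieAlgebra.of k δ)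
  set m : FreeMetabelianLieAlgebra k (Fin 3 → Bool) ⧸ cubeIdeal k := LieSubmodule.Quotient.mk (N := cubeIdeal k) (FreeMetabelianLieAlgebra.of k μ)
  set g : FreeMetabelianLieAlgebra k (Fin 3 → Bool) ⧸ cubeIdeal k := LieSubmodule.Quotient.mk (N := cubeIdeal k) (FreeMetabelianLieAlgebra.of k γ)
  have hme : ⁅m, e⁆ = 0 := dist1 μ ε h2
  have hgm : ⁅g, m⁆ = 0 := dist1 γ μ h4
  have hgd : ⁅g, d⁆ = 0 := dist1 γ δ h5
  have hem : ⁅e, m⁆ = 0 := by rw [← lie_skew, hme, neg_zero]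
  have hmg : ⁅m, g⁆ = 0 := by rw [← lie_skew, hgm, neg_zero]
  have hdg : ⁅d, g⁆ = 0 := by rw [← lie_skew, hgd, neg_zero]
  have goal : ⁅⁅⁅e, d⁆, m⁆, g⁆ = 0 := by
    have step1 : ⁅⁅e, d⁆, m⁆ = ⁅e, ⁅d, m⁆⁆ := by
      rw [lie_lie, hem, lie_zero, sub_zero]
    have step2 : ⁅⁅d, m⁆, g⁆ = 0 := by
      rw [lie_lie, hmg, lie_zero, hdg, lie_zero, sub_zero]
    calc ⁅⁅⁅e, d⁆, m⁆, g⁆ = ⁅⁅e, ⁅d, m⁆⁆, g⁆ := by rw [step1]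
      _ = ⁅e, ⁅⁅d, m⁆, g⁆⁆ - ⁅⁅d, m⁆, ⁅e, g⁆⁆ := by rw [lie_lie]
      _ = 0 := by rw [step2, lie_zero, metab, sub_zero]
  calc LieSubmodule.Quotient.mk (N := cubeIdeal k)
        ⁅⁅⁅FreeMetabelianLieAlgebra.of k ε, FreeMetabelianLieAlgebra.of k δ⁆,
            FreeMetabelianLieAlgebra.of k μ⁆, FreeMetabelianLieAlgebra.of k γ⁆
      = ⁅⁅⁅e, d⁆, m⁆, g⁆ := rfl
    _ = 0 := goal
end

section
/- Let k be a field, let V₃ = {0,1}³ with Hamming distance d, and let ML_{Cu₃} be the quotient of the free metabelian Lie algebra L₍₂₎(V₃) over k by the Lie ideal generated by all brackets ⁅ε,δ⁆ with d(ε,δ) = 1. Then for all δ₁, δ₂, γ, μ₁, μ₂ ∈ V₃ with d(δ₁,δ₂) = 2 and, for i = 1, 2, d(γ,δᵢ) = 2, d(μᵢ,γ) = 1 and d(μᵢ,δᵢ) = 1, the image in ML_{Cu₃} of the left-normed bracket [⁅δ₁,δ₂⁆, γ, μ₁, μ₂] is zero. -/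
-- metabelian: bracket of brackets is zero in FreeMetabelianLieAlgebra
lemma metab (k : Type u) [Field k] {X : Type v} (a b c d : FreeMetabelianLieAlgebra k X) :
    ⁅⁅a, b⁆, ⁅c, d⁆⁆ = 0 := by
  obtain ⟨a, rfl⟩ := LieSubmodule.Quotient.surjective_mk' _ a
  obtain ⟨b, rfl⟩ := LieSubmodule.Quotient.surjective_mk' _ b
  obtain ⟨c, rfl⟩ := LieSubmodule.Quotient.surjective_mk' _ c
  obtain ⟨d, rfl⟩ := LieSubmodule.Quotient.surjective_mk' _ d
  show ⁅⁅LieSubmodule.Quotient.mk a, LieSubmodule.Quotient.mk b⁆,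
      ⁅LieSubmodule.Quotient.mk c, LieSubmodule.Quotient.mk d⁆⁆ = 0
  rw [← LieSubmodule.Quotient.mk_bracket, ← LieSubmodule.Quotient.mk_bracket,
    ← LieSubmodule.Quotient.mk_bracket, LieSubmodule.Quotient.mk_eq_zero']
  have h1 : ⁅a, b⁆ ∈ LieAlgebra.derivedSeries k (FreeLieAlgebra k X) 1 := by
    rw [LieAlgebra.derivedSeries_def, LieAlgebra.derivedSeriesOfIdeal_succ,
      LieAlgebra.derivedSeriesOfIdeal_zero]
    exact LieSubmodule.lie_mem_lie trivial trivial
  have h2 : ⁅c, d⁆ ∈ LieAlgebra.derivedSeries k (FreeLieAlgebra k X) 1 := by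
    rw [LieAlgebra.derivedSeries_def, LieAlgebra.derivedSeriesOfIdeal_succ,
      LieAlgebra.derivedSeriesOfIdeal_zero]
    exact LieSubmodule.lie_mem_lie trivial trivial
  rw [show (2 : ℕ) = 1 + 1 from rfl, LieAlgebra.derivedSeries_def,
    LieAlgebra.derivedSeriesOfIdeal_succ, ← LieAlgebra.derivedSeries_def]
  exact LieSubmodule.lie_mem_lie h1 h2

lemma metabQ (k : Type u) [Field k]
    (a b c d : FreeMetabelianLieAlgebra k (Fin 3 → Bool) ⧸ cubeIdeal k) :
    ⁅⁅a, b⁆, ⁅c, d⁆⁆ = 0 := by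
  obtain ⟨a, rfl⟩ := LieSubmodule.Quotient.surjective_mk' _ a
  obtain ⟨b, rfl⟩ := LieSubmodule.Quotient.surjective_mk' _ b
  obtain ⟨c, rfl⟩ := LieSubmodule.Quotient.surjective_mk' _ c
  obtain ⟨d, rfl⟩ := LieSubmodule.Quotient.surjective_mk' _ d
  show ⁅⁅LieSubmodule.Quotient.mk a, LieSubmodule.Quotient.mk b⁆,
      ⁅LieSubmodule.Quotient.mk c, LieSubmodule.Quotient.mk d⁆⁆ = 0
  rw [← LieSubmodule.Quotient.mk_bracket, ← LieSubmodule.Quotient.mk_bracket,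
    ← LieSubmodule.Quotient.mk_bracket, metab, LieSubmodule.Quotient.mk_eq_zero']
  exact (cubeIdeal k).zero_mem


/-- In the partial commutative metabelian Lie algebra of the 3-cube, the image of the
left-normed bracket `[⁅δ₁,δ₂⁆, γ, μ₁, μ₂]` is zero whenever `d(δ₁,δ₂) = 2` and, for
`i = 1, 2`, `d(γ,δᵢ) = 2`, `d(μᵢ,γ) = 1` and `d(μᵢ,δᵢ) = 1`. -/
theorem cube_relation_R5 (k : Type u) [Field k] (δ₁ δ₂ γ μ₁ μ₂ : Fin 3 → Bool)
    (h1 : hammingDist δ₁ δ₂ = 2)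
    (h2 : hammingDist γ δ₁ = 2) (h3 : hammingDist γ δ₂ = 2)
    (h4 : hammingDist μ₁ γ = 1) (h5 : hammingDist μ₁ δ₁ = 1)
    (h6 : hammingDist μ₂ γ = 1) (h7 : hammingDist μ₂ δ₂ = 1) :
    LieSubmodule.Quotient.mk (N := cubeIdeal k)
        ⁅⁅⁅⁅FreeMetabelianLieAlgebra.of k δ₁, FreeMetabelianLieAlgebra.of k δ₂⁆,
              FreeMetabelianLieAlgebra.of k γ⁆, FreeMetabelianLieAlgebra.of k μ₁⁆,
          FreeMetabelianLieAlgebra.of k μ₂⁆ = 0 := by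
  have adj : ∀ ε δ : Fin 3 → Bool, hammingDist ε δ = 1 →
      ⁅(LieSubmodule.Quotient.mk (N := cubeIdeal k) (FreeMetabelianLieAlgebra.of k ε)),
        LieSubmodule.Quotient.mk (N := cubeIdeal k) (FreeMetabelianLieAlgebra.of k δ)⁆ = 0 := by
    intro ε δ h
    rw [← LieSubmodule.Quotient.mk_bracket, LieSubmodule.Quotient.mk_eq_zero']
    exact LieSubmodule.subset_lieSpan ⟨ε, δ, h, rfl⟩
  set D1 := LieSubmodule.Quotient.mk (N := cubeIdeal k) (FreeMetabelianLieAlgebra.of k δ₁)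
  set D2 := LieSubmodule.Quotient.mk (N := cubeIdeal k) (FreeMetabelianLieAlgebra.of k δ₂)
  set G := LieSubmodule.Quotient.mk (N := cubeIdeal k) (FreeMetabelianLieAlgebra.of k γ)
  set M1 := LieSubmodule.Quotient.mk (N := cubeIdeal k) (FreeMetabelianLieAlgebra.of k μ₁)
  set M2 := LieSubmodule.Quotient.mk (N := cubeIdeal k) (FreeMetabelianLieAlgebra.of k μ₂)
  rw [LieSubmodule.Quotient.mk_bracket, LieSubmodule.Quotient.mk_bracket,
    LieSubmodule.Quotient.mk_bracket, LieSubmodule.Quotient.mk_bracket]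
  have hzero : ∀ a b c : FreeMetabelianLieAlgebra k (Fin 3 → Bool) ⧸ cubeIdeal k,
      ⁅c, a⁆ = 0 → ⁅c, b⁆ = 0 → ⁅⁅a, b⁆, c⁆ = 0 := by
    intro a b c ha hb
    rw [← neg_eq_zero, lie_skew, leibniz_lie, ha, hb]
    simp
  have hswap : ∀ a b c d : FreeMetabelianLieAlgebra k (Fin 3 → Bool) ⧸ cubeIdeal k,
      ⁅⁅⁅a, b⁆, c⁆, d⁆ = ⁅⁅⁅a, b⁆, d⁆, c⁆ := by
    intro a b c d
    have h := leibniz_lie ⁅a, b⁆ c d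
    rw [metabQ] at h
    have h2 : ⁅⁅⁅a, b⁆, c⁆, d⁆ = -⁅c, ⁅⁅a, b⁆, d⁆⁆ := by
      rw [eq_neg_iff_add_eq_zero, ← h]
    rw [h2, lie_skew]
  have key : ⁅⁅D1, D2⁆, G⁆ = ⁅⁅D1, G⁆, D2⁆ - ⁅⁅D2, G⁆, D1⁆ := by
    rw [lie_lie, ← lie_skew ⁅D1, G⁆ D2, ← lie_skew ⁅D2, G⁆ D1]
    abel
  rw [key, sub_lie, sub_lie]
  have e1 : ⁅⁅⁅D1, G⁆, D2⁆, M1⁆ = 0 := by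
    rw [hswap, hzero (D1) G M1 (adj μ₁ δ₁ h5) (adj μ₁ γ h4), zero_lie]
  have e2 : ⁅⁅⁅⁅D2, G⁆, D1⁆, M1⁆, M2⁆ = 0 := by
    rw [hswap ⁅D2, G⁆ D1 M1 M2, hswap D2 G D1 M2,
      hzero D2 G M2 (adj μ₂ δ₂ h7) (adj μ₂ γ h6), zero_lie, zero_lie]
  rw [e1, e2, zero_lie, sub_zero]
end
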